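/- arXiv:1605.08965 — 10 statements merged into one kernel-verified Lean document; each statement's English description precedes it below -/
import Mathlib

section
/- Let α ∈ ℝ, S ∈ (0,∞], and let φ₁ : [0,S) → ℝ be continuous with φ₁(t) > 0 for all t. Define τ(s) = ∫₀ˢ e^{−αz}/φ₁(z)² dz. Then for every t ∈ [0,S): ∫₀ᵗ e^{αs} τ(s) φ₁(s) ds − τ(t)·∫₀ᵗ e^{αs} φ₁(s) ds = −∫₀ᵗ ( ∫ₛᵗ (φ₁(s)/φ₁(z)²)·e^{α(s−z)} dz ) ds. In particular this quantity is ≤ 0 for every t ∈ [0,S). -/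
/-!
Writing `f s = e^{αs} φ₁(s)` and `g z = e^{-αz} / φ₁(z)²`, so that `τ` is the primitive of `g`
vanishing at `0`, the two terms of `σ(t)` combine into `∫₀ᵗ f(s) (τ(s) - τ(t)) ds`, and
`τ(s) - τ(t) = -∫ₛᵗ g`. The product `f(s) g(z)` is the integrand `(φ₁(s)/φ₁(z)²) e^{α(s-z)}`,
nonnegative because `φ₁ > 0`.
-/

open Set intervalIntegral

theorem integral_mul_primitive_sub_primitive_mul_integral {f g τ : ℝ → ℝ} {a b : ℝ}
    (hf : IntervalIntegrable f MeasureTheory.volume a b)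
    (hg : IntervalIntegrable g MeasureTheory.volume a b)
    (hτ : ∀ s, τ s = ∫ z in a..s, g z) :
    (∫ s in a..b, f s * τ s) - τ b * ∫ s in a..b, f s
      = -∫ s in a..b, ∫ z in s..b, f s * g z := by
  have hτcont : ContinuousOn τ (uIcc a b) :=
    (continuousOn_primitive_interval' hg left_mem_uIcc).congr fun s _ => hτ s
  rw [← integral_const_mul, ← integral_sub (hf.mul_continuousOn hτcont) (hf.const_mul _),
    ← integral_neg]
  refine integral_congr fun s hs => ?_
  have hτ_sub : τ b - τ s = ∫ z in s..b, g z := by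
    rw [hτ, hτ]
    exact integral_interval_sub_left hg (hg.mono_set (uIcc_subset_uIcc_left hs))
  rw [integral_const_mul, ← hτ_sub]
  ring

theorem exp_mul_mul_exp_div_sq (α s z x y : ℝ) :
    Real.exp (α * s) * x * (Real.exp (-α * z) / y ^ 2) = x / y ^ 2 * Real.exp (α * (s - z)) := by
  rw [mul_sub, sub_eq_add_neg, Real.exp_add, ← neg_mul]
  ring

theorem sigma_double_integral_nonpositive_general
    (α : ℝ) (S : EReal) (φ₁ : ℝ → ℝ)
    (hcont : ContinuousOn φ₁ {t : ℝ | 0 ≤ t ∧ (t : EReal) < S})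
    (hpos : ∀ t : ℝ, 0 ≤ t → (t : EReal) < S → 0 < φ₁ t)
    (τ : ℝ → ℝ)
    (hτ : ∀ s : ℝ, τ s = ∫ z in (0:ℝ)..s, Real.exp (-α * z) / (φ₁ z) ^ 2) :
    ∀ t : ℝ, 0 ≤ t → (t : EReal) < S →
      ((∫ s in (0:ℝ)..t, Real.exp (α * s) * τ s * φ₁ s) -
          τ t * ∫ s in (0:ℝ)..t, Real.exp (α * s) * φ₁ s)
        = -∫ s in (0:ℝ)..t, ∫ z in s..t, (φ₁ s / (φ₁ z) ^ 2) * Real.exp (α * (s - z)) ∧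
      ((∫ s in (0:ℝ)..t, Real.exp (α * s) * τ s * φ₁ s) -
          τ t * ∫ s in (0:ℝ)..t, Real.exp (α * s) * φ₁ s) ≤ 0 := by
  intro t ht0 htS
  have hsub : Icc 0 t ⊆ {s : ℝ | 0 ≤ s ∧ (s : EReal) < S} := fun s hs =>
    ⟨hs.1, (EReal.coe_le_coe_iff.mpr hs.2).trans_lt htS⟩
  have hφpos : ∀ s ∈ Icc 0 t, 0 < φ₁ s := fun s hs => hpos s (hsub hs).1 (hsub hs).2
  have hφcont : ContinuousOn φ₁ (Icc 0 t) := hcont.mono hsub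
  have hf : IntervalIntegrable (fun s => Real.exp (α * s) * φ₁ s) MeasureTheory.volume 0 t :=
    ((by fun_prop : Continuous fun s => Real.exp (α * s)).continuousOn.mul hφcont)
      |>.intervalIntegrable_of_Icc ht0
  have hg : IntervalIntegrable (fun z => Real.exp (-α * z) / φ₁ z ^ 2) MeasureTheory.volume 0 t :=
    ((by fun_prop : Continuous fun z => Real.exp (-α * z)).continuousOn.div (hφcont.pow 2)
      fun z hz => (pow_pos (hφpos z hz) 2).ne').intervalIntegrable_of_Icc ht0
  have key := integral_mul_primitive_sub_primitive_mul_integral hf hg hτ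
  simp only [mul_right_comm (Real.exp _) (φ₁ _) (τ _), exp_mul_mul_exp_div_sq] at key
  refine ⟨key, ?_⟩
  rw [key, neg_nonpos]
  refine integral_nonneg ht0 fun s hs => integral_nonneg hs.2 fun z _ => ?_
  exact mul_nonneg (div_nonneg (hφpos s hs).le (sq_nonneg _)) (Real.exp_pos _).le

/-- The coefficient function
`σ(t) = ∫₀ᵗ e^{αs} τ(s) φ₁(s) ds − τ(t) ∫₀ᵗ e^{αs} φ₁(s) ds`, with
`τ(s) = ∫₀ˢ e^{−αz}/φ₁(z)² dz`, equals
`−∫₀ᵗ ∫ₛᵗ (φ₁(s)/φ₁(z)²) e^{α(s−z)} dz ds`, and is therefore nonpositive.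
The interval `[0, S)`, `S ∈ (0, ∞]`, is encoded via `S : EReal`, `0 < S`. -/
theorem sigma_double_integral_nonpositive
    (α : ℝ) (S : EReal) (hS : 0 < S) (φ₁ : ℝ → ℝ)
    (hcont : ContinuousOn φ₁ {t : ℝ | 0 ≤ t ∧ (t : EReal) < S})
    (hpos : ∀ t : ℝ, 0 ≤ t → (t : EReal) < S → 0 < φ₁ t)
    (τ : ℝ → ℝ)
    (hτ : ∀ s : ℝ, τ s = ∫ z in (0:ℝ)..s, Real.exp (-α * z) / (φ₁ z) ^ 2) :
    ∀ t : ℝ, 0 ≤ t → (t : EReal) < S →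
      ((∫ s in (0:ℝ)..t, Real.exp (α * s) * τ s * φ₁ s) -
          τ t * ∫ s in (0:ℝ)..t, Real.exp (α * s) * φ₁ s)
        = -∫ s in (0:ℝ)..t, ∫ z in s..t, (φ₁ s / (φ₁ z) ^ 2) * Real.exp (α * (s - z)) ∧
      ((∫ s in (0:ℝ)..t, Real.exp (α * s) * τ s * φ₁ s) -
          τ t * ∫ s in (0:ℝ)..t, Real.exp (α * s) * φ₁ s) ≤ 0 :=
  sigma_double_integral_nonpositive_general α S φ₁ hcont hpos τ hτ
end

section
/- Let Q = [0,1]² ⊂ ℝ², let α > 0, and let γ₀, ρ₀ : Q → ℝ be continuous with ρ₀(a) ≥ 0 for all a ∈ Q. Let m₀ := min_{a ∈ Q} γ₀(a) < 0 and τ* := −1/m₀. Let T ∈ (0,∞] and let φ₁, σ, τ_α : [0,T) → ℝ be continuous functions satisfying, for all t ∈ [0,T): τ_α(t) = ∫₀ᵗ e^{−αs}/φ₁(s)² ds; σ(t) = −∫₀ᵗ ( ∫ₛᵗ (φ₁(s)/φ₁(z)²)·e^{α(s−z)} dz ) ds; φ₁(t) = ∫_Q da/(1 + γ₀(a)·τ_α(t)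 − ρ₀(a)·σ(t)); and 0 ≤ τ_α(t) < τ*. Then φ₁(t) > 0 for all t ∈ [0,T). -/
open MeasureTheory Set

/-!
Along any solution the denominator `1 + γ₀ τ_α − ρ₀ σ` is positive on `Q` as long as `σ ≤ 0`,
because `1 + m₀ τ_α > 0` for `τ_α < τ*` and `ρ₀ ≥ 0`; then `φ₁`, the integral of its
reciprocal over a set of measure one, is positive. If `φ₁` vanished somewhere, take the first
time `t₁` where `φ₁ ≤ 0`: on `[0, t₁)` the integrand defining `σ` is nonnegative, so
`σ(t₁) ≤ 0` and therefore `φ₁(t₁) > 0`, a contradiction.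
-/

namespace EuclideanSpace

variable {ι : Type*}

lemma unitCube_eq_preimage :
    {a : EuclideanSpace ℝ ι | ∀ i, a i ∈ Icc (0 : ℝ) 1} =
      (MeasurableEquiv.toLp 2 (ι → ℝ)).symm ⁻¹' univ.pi fun _ => Icc 0 1 := by
  ext a
  simp only [mem_preimage, mem_univ_pi]
  rfl

lemma isCompact_unitCube [Fintype ι] :
    IsCompact {a : EuclideanSpace ℝ ι | ∀ i, a i ∈ Icc (0 : ℝ) 1} := by
  rw [unitCube_eq_preimage]
  exact (PiLp.homeomorph 2 fun _ : ι => ℝ).isCompact_preimage.mpr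
    (isCompact_univ_pi fun _ => isCompact_Icc)

lemma volume_unitCube [Fintype ι] :
    volume {a : EuclideanSpace ℝ ι | ∀ i, a i ∈ Icc (0 : ℝ) 1} = 1 := by
  rw [unitCube_eq_preimage, (volume_preserving_symm_measurableEquiv_toLp ι).measure_preimage
    (MeasurableSet.univ_pi fun _ => measurableSet_Icc).nullMeasurableSet, volume_pi_pi]
  simp [Real.volume_Icc]

end EuclideanSpace

lemma IsCompact.setIntegral_pos_of_continuousOn {X : Type*} [TopologicalSpace X] [T2Space X]
    [MeasurableSpace X] [OpensMeasurableSpace X] {μ : Measure X} [IsFiniteMeasureOnCompacts μ]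
    {K : Set X} {f : X → ℝ} (hK : IsCompact K) (hμK : μ K ≠ 0) (hf : ContinuousOn f K)
    (hpos : ∀ x ∈ K, 0 < f x) : 0 < ∫ x in K, f x ∂μ := by
  have hKmeas : MeasurableSet K := hK.isClosed.measurableSet
  rw [setIntegral_pos_iff_support_of_nonneg_ae
    ((ae_restrict_iff' hKmeas).mpr (ae_of_all _ fun x hx => (hpos x hx).le))
    (hf.integrableOn_compact hK),
    inter_eq_right.mpr (show K ⊆ f.support from fun x hx => (hpos x hx).ne')]
  exact pos_iff_ne_zero.mpr hμK

lemma one_add_mul_sub_mul_pos {m₀ γ τ ρ σ : ℝ} (hm₀ : m₀ < 0) (hγ : m₀ ≤ γ) (hτ₀ : 0 ≤ τ)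
    (hτ : τ < -1 / m₀) (hρ : 0 ≤ ρ) (hσ : σ ≤ 0) : 0 < 1 + γ * τ - ρ * σ := by
  have hm₀τ : -1 < m₀ * τ := by
    rwa [lt_div_iff_of_neg hm₀, mul_comm] at hτ
  nlinarith [mul_le_mul_of_nonneg_right hγ hτ₀, mul_nonpos_of_nonneg_of_nonpos hρ hσ]

/-- No integrability is needed, a non-integrable interval integral being `0`; and `φ t` may have
any sign, since at `s = t` the inner integral is over `[t, t]`. -/
lemma integral_integral_div_sq_mul_exp_nonneg {φ : ℝ → ℝ} {α t : ℝ} (ht : 0 ≤ t)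
    (hφ : ∀ s ∈ Ico 0 t, 0 ≤ φ s) :
    0 ≤ ∫ s in (0 : ℝ)..t, ∫ z in s..t, (φ s / φ z ^ 2) * Real.exp (α * (s - z)) := by
  refine intervalIntegral.integral_nonneg ht fun s hs => ?_
  rcases hs.2.eq_or_lt with rfl | hst
  · rw [intervalIntegral.integral_same]
  · exact intervalIntegral.integral_nonneg hs.2 fun z _ =>
      mul_nonneg (div_nonneg (hφ s ⟨hs.1, hst⟩) (sq_nonneg _)) (Real.exp_pos _).le

lemma exists_first_nonpos_of_continuousOn {f : ℝ → ℝ} {a b : ℝ} (hab : a ≤ b)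
    (hf : ContinuousOn f (Icc a b)) (hfb : f b ≤ 0) :
    ∃ c ∈ Icc a b, f c ≤ 0 ∧ ∀ s ∈ Ico a c, 0 < f s := by
  set A := Icc a b ∩ f ⁻¹' Iic 0
  have hAclosed : IsClosed A := hf.preimage_isClosed_of_isClosed isClosed_Icc isClosed_Iic
  have hAbdd : BddBelow A := ⟨a, fun s hs => hs.1.1⟩
  have hcA : sInf A ∈ A := hAclosed.csInf_mem ⟨b, ⟨hab, le_rfl⟩, hfb⟩ hAbdd
  refine ⟨sInf A, hcA.1, hcA.2, fun s hs => lt_of_not_ge fun hfs => ?_⟩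
  exact hs.2.not_ge (csInf_le hAbdd ⟨⟨hs.1, hs.2.le.trans hcA.1.2⟩, hfs⟩)

theorem phi_positive_damped_boussinesq_general
    (α : ℝ)
    (Q : Set (EuclideanSpace ℝ (Fin 2)))
    (hQ : Q = {a : EuclideanSpace ℝ (Fin 2) | ∀ i, a i ∈ Set.Icc (0:ℝ) 1})
    (γ₀ ρ₀ : EuclideanSpace ℝ (Fin 2) → ℝ)
    (hγcont : ContinuousOn γ₀ Q) (hρcont : ContinuousOn ρ₀ Q)
    (hρnonneg : ∀ a ∈ Q, 0 ≤ ρ₀ a)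
    (m₀ : ℝ)
    (hm₀min : ∀ a ∈ Q, m₀ ≤ γ₀ a) (hm₀neg : m₀ < 0)
    (T : EReal)
    (φ₁ σ τα : ℝ → ℝ)
    (hφcont : ContinuousOn φ₁ {t : ℝ | 0 ≤ t ∧ (t : EReal) < T})
    (hσ : ∀ t : ℝ, 0 ≤ t → (t : EReal) < T →
      σ t = -∫ s in (0:ℝ)..t, ∫ z in s..t, (φ₁ s / (φ₁ z) ^ 2) * Real.exp (α * (s - z)))
    (hφ : ∀ t : ℝ, 0 ≤ t → (t : EReal) < T →
      φ₁ t = ∫ a in Q, 1 / (1 + γ₀ a * τα t - ρ₀ a * σ t))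
    (hτrange : ∀ t : ℝ, 0 ≤ t → (t : EReal) < T → 0 ≤ τα t ∧ τα t < -1 / m₀) :
    ∀ t : ℝ, 0 ≤ t → (t : EReal) < T → 0 < φ₁ t := by
  have pos_of_sigma_nonpos : ∀ t : ℝ, 0 ≤ t → (t : EReal) < T → σ t ≤ 0 → 0 < φ₁ t := by
    intro t ht htT hσt
    have hden : ∀ a ∈ Q, 0 < 1 + γ₀ a * τα t - ρ₀ a * σ t := fun a ha =>
      one_add_mul_sub_mul_pos hm₀neg (hm₀min a ha) (hτrange t ht htT).1 (hτrange t ht htT).2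
        (hρnonneg a ha) hσt
    rw [hφ t ht htT]
    subst hQ
    refine EuclideanSpace.isCompact_unitCube.setIntegral_pos_of_continuousOn
      (by rw [EuclideanSpace.volume_unitCube]; exact one_ne_zero) ?_
      fun a ha => one_div_pos.mpr (hden a ha)
    exact continuousOn_const.div ((continuousOn_const.add (hγcont.mul continuousOn_const)).sub
      (hρcont.mul continuousOn_const)) fun a ha => (hden a ha).ne'
  intro t ht htT
  by_contra! hφt
  have hIcc : Icc 0 t ⊆ {s : ℝ | 0 ≤ s ∧ (s : EReal) < T} := fun s hs =>
    ⟨hs.1, lt_of_le_of_lt (by exact_mod_cast hs.2) htT⟩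
  obtain ⟨t₁, ht₁, hφt₁, hφpos⟩ := exists_first_nonpos_of_continuousOn ht (hφcont.mono hIcc) hφt
  have hσt₁ : σ t₁ ≤ 0 := by
    rw [hσ t₁ ht₁.1 (hIcc ht₁).2, neg_nonpos]
    exact integral_integral_div_sq_mul_exp_nonneg ht₁.1 fun s hs => (hφpos s hs).le
  exact hφt₁.not_gt (pos_of_sigma_nonpos t₁ ht₁.1 (hIcc ht₁).2 hσt₁)

/-- Lemma 4.1 of Chen–Sarria. For nonnegative initial
temperature `ρ₀` and as long as `0 ≤ τ_α(t) < τ* = −1/m₀`, the function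
`φ₁(t) = ∫_Q da/(1 + γ₀(a) τ_α(t) − ρ₀(a) σ(t))` stays strictly positive.
Here `Q = [0,1]² ⊂ ℝ²` (as `EuclideanSpace ℝ (Fin 2)`), integrals are with
respect to 2-dimensional Lebesgue measure, and the interval `[0, T)` with
`T ∈ (0, ∞]` is encoded via `T : EReal`, `0 < T`. -/
theorem phi_positive_damped_boussinesq
    (α : ℝ) (hα : 0 < α)
    (Q : Set (EuclideanSpace ℝ (Fin 2)))
    (hQ : Q = {a : EuclideanSpace ℝ (Fin 2) | ∀ i, a i ∈ Set.Icc (0:ℝ) 1})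
    (γ₀ ρ₀ : EuclideanSpace ℝ (Fin 2) → ℝ)
    (hγcont : ContinuousOn γ₀ Q) (hρcont : ContinuousOn ρ₀ Q)
    (hρnonneg : ∀ a ∈ Q, 0 ≤ ρ₀ a)
    (m₀ : ℝ) (hm₀attained : ∃ a ∈ Q, γ₀ a = m₀)
    (hm₀min : ∀ a ∈ Q, m₀ ≤ γ₀ a) (hm₀neg : m₀ < 0)
    (T : EReal) (hT : 0 < T)
    (φ₁ σ τα : ℝ → ℝ)
    (hφcont : ContinuousOn φ₁ {t : ℝ | 0 ≤ t ∧ (t : EReal) < T})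
    (hσcont : ContinuousOn σ {t : ℝ | 0 ≤ t ∧ (t : EReal) < T})
    (hτcont : ContinuousOn τα {t : ℝ | 0 ≤ t ∧ (t : EReal) < T})
    (hτ : ∀ t : ℝ, 0 ≤ t → (t : EReal) < T →
      τα t = ∫ s in (0:ℝ)..t, Real.exp (-α * s) / (φ₁ s) ^ 2)
    (hσ : ∀ t : ℝ, 0 ≤ t → (t : EReal) < T →
      σ t = -∫ s in (0:ℝ)..t, ∫ z in s..t, (φ₁ s / (φ₁ z) ^ 2) * Real.exp (α * (s - z)))
    (hφ : ∀ t : ℝ, 0 ≤ t → (t : EReal) < T →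
      φ₁ t = ∫ a in Q, 1 / (1 + γ₀ a * τα t - ρ₀ a * σ t))
    (hτrange : ∀ t : ℝ, 0 ≤ t → (t : EReal) < T → 0 ≤ τα t ∧ τα t < -1 / m₀) :
    ∀ t : ℝ, 0 ≤ t → (t : EReal) < T → 0 < φ₁ t :=
  phi_positive_damped_boussinesq_general α Q hQ γ₀ ρ₀ hγcont hρcont hρnonneg m₀ hm₀min hm₀neg T φ₁ σ
    τα hφcont hσ hφ hτrange
end

section
/- Let a₀ ∈ ℝ², r > 0, ε > 0, m₀ ∈ ℝ, λ₁ ≥ λ₂ > 0, and let g : ℝ² → ℝ be a measurable function satisfying m₀ + (λ₂/2)|a − a₀|² ≤ g(a) ≤ m₀ + (λ₁/2)|a − a₀|² for all a in the closed disk D of radius r centered at a₀. Then (2π/λ₁)·ln(1 + λ₁r²/(2ε)) ≤ ∫_D 1/(ε + g(a) − m₀) da ≤ (2π/λ₂)·ln(1 + λ₂r²/(2ε)), where the integral is with respect to 2-dimensional Lebesgue measure. -/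
/-!
On the disk the hypotheses sandwich `ε + g a - m₀` between the radial functions
`ε + (λ/2)‖a - a₀‖²` for `λ = λ₂` and `λ = λ₁`, so the integral of its reciprocal is pinched between
the integrals of their reciprocals. In polar coordinates these are
`2π ∫₀ʳ y / (ε + (λ/2) y²) dy = (2π/λ) log (1 + λr²/(2ε))`.
-/

open MeasureTheory Real Set Metric

lemma integral_id_div_const_add_mul_sq {ε lam : ℝ} (hε : 0 < ε) (hlam : 0 < lam) (r : ℝ) :
    ∫ y in (0 : ℝ)..r, y / (ε + lam / 2 * y ^ 2) = 1 / lam * log (1 + lam * r ^ 2 / (2 * ε)) := by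
  have hpos : ∀ y : ℝ, 0 < ε + lam / 2 * y ^ 2 := fun y => by positivity
  have hderiv : ∀ y ∈ uIcc 0 r,
      HasDerivAt (fun y => 1 / lam * log (ε + lam / 2 * y ^ 2)) (y / (ε + lam / 2 * y ^ 2)) y := by
    intro y _
    have hq : HasDerivAt (fun y : ℝ => ε + lam / 2 * y ^ 2) (lam * y) y :=
      (((hasDerivAt_pow 2 y).const_mul (lam / 2)).const_add ε).congr_deriv (by ring)
    refine ((hq.log (hpos y).ne').const_mul (1 / lam)).congr_deriv ?_
    field_simp
  have hcont : Continuous fun y : ℝ => y / (ε + lam / 2 * y ^ 2) :=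
    continuous_id.div (by fun_prop) fun y => (hpos y).ne'
  rw [intervalIntegral.integral_eq_sub_of_hasDerivAt hderiv (hcont.intervalIntegrable _ _),
    ← mul_sub, ← log_div (hpos r).ne' (hpos 0).ne']
  congr 2
  field_simp
  ring

lemma setIntegral_closedBall_fun_norm_sub (a₀ : EuclideanSpace ℝ (Fin 2)) (r : ℝ) (f : ℝ → ℝ) :
    ∫ a in closedBall a₀ r, f ‖a - a₀‖ = 2 * π * ∫ y in Ioc 0 r, y * f y := by
  have hball : ∀ a, (closedBall a₀ r).indicator (fun a => f ‖a - a₀‖) a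
      = (Iic r).indicator f ‖a - a₀‖ := fun a => by
    simp [indicator, dist_eq_norm]
  have hradial : ∫ y in Ioi (0 : ℝ), y ^ (2 - 1) • (Iic r).indicator f y
      = ∫ y in Ioc 0 r, y * f y := by
    have hintegrand : ∀ y : ℝ, y ^ (2 - 1) • (Iic r).indicator f y = (Iic r).indicator (fun y => y * f y) y :=
      fun y => by rw [indicator_mul_right]; simp
    simp_rw [hintegrand]
    rw [integral_indicator measurableSet_Iic, Measure.restrict_restrict measurableSet_Iic,
      inter_comm, Ioi_inter_Iic]
  simp_rw [← integral_indicator measurableSet_closedBall, hball]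
  rw [integral_sub_right_eq_self (fun a => (Iic r).indicator f ‖a‖) a₀,
    integral_fun_norm_addHaar volume, finrank_euclideanSpace_fin, measureReal_def,
    EuclideanSpace.volume_ball_fin_two, hradial]
  simp only [ENNReal.ofReal_one, one_pow, one_mul, pi_pos.le, ENNReal.toReal_ofReal, smul_eq_mul,
    nsmul_eq_mul, Nat.cast_ofNat]
  ring

lemma setIntegral_closedBall_one_div_const_add_mul_norm_sq (a₀ : EuclideanSpace ℝ (Fin 2))
    {r ε lam : ℝ} (hr : 0 ≤ r) (hε : 0 < ε) (hlam : 0 < lam) :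
    ∫ a in closedBall a₀ r, 1 / (ε + lam / 2 * ‖a - a₀‖ ^ 2) =
      2 * π / lam * log (1 + lam * r ^ 2 / (2 * ε)) := by
  simp_rw [setIntegral_closedBall_fun_norm_sub a₀ r (fun y => 1 / (ε + lam / 2 * y ^ 2)),
    mul_one_div, ← intervalIntegral.integral_of_le hr, integral_id_div_const_add_mul_sq hε hlam]
  ring

section OneDivComparison

variable {α : Type*} [MeasurableSpace α] {μ : Measure α} {s : Set α} {u v : α → ℝ} {c : ℝ}

lemma integrableOn_one_div_of_le (hs : MeasurableSet s) (hμs : μ s ≠ ⊤)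
    (hv : AEStronglyMeasurable v (μ.restrict s)) (hc : 0 < c) (hcv : ∀ a ∈ s, c ≤ v a) :
    IntegrableOn (fun a => 1 / v a) s μ := by
  refine Integrable.mono' (integrableOn_const hμs (C := 1 / c))
    (aemeasurable_const.div hv.aemeasurable).aestronglyMeasurable ?_
  filter_upwards [ae_restrict_mem hs] with a ha
  have hva : 0 < v a := hc.trans_le (hcv a ha)
  rw [Real.norm_of_nonneg (one_div_pos.mpr hva).le]
  exact one_div_le_one_div_of_le hc (hcv a ha)

lemma setIntegral_one_div_le_of_le (hs : MeasurableSet s) (hμs : μ s ≠ ⊤)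
    (hu : AEStronglyMeasurable u (μ.restrict s)) (hv : AEStronglyMeasurable v (μ.restrict s))
    (hc : 0 < c) (hcu : ∀ a ∈ s, c ≤ u a) (huv : ∀ a ∈ s, u a ≤ v a) :
    ∫ a in s, 1 / v a ∂μ ≤ ∫ a in s, 1 / u a ∂μ :=
  setIntegral_mono_on
    (integrableOn_one_div_of_le hs hμs hv hc fun a ha => (hcu a ha).trans (huv a ha))
    (integrableOn_one_div_of_le hs hμs hu hc hcu) hs
    fun a ha => one_div_le_one_div_of_le (hc.trans_le (hcu a ha)) (huv a ha)

end OneDivComparison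

/-- estimate (4.4) of Chen–Sarria. For a measurable `g` with
two-sided quadratic behavior `m₀ + (λ₂/2)|a−a₀|² ≤ g(a) ≤ m₀ + (λ₁/2)|a−a₀|²`
on the closed disk `D` of radius `r` about `a₀`, the integral
`∫_D da/(ε + g(a) − m₀)` is pinched between the corresponding logarithmic
expressions. Integrals are with respect to 2-dimensional Lebesgue measure. -/
theorem quadratic_minimum_log_estimate
    (a₀ : EuclideanSpace ℝ (Fin 2)) (r ε m₀ lam₁ lam₂ : ℝ)
    (hr : 0 < r) (hε : 0 < ε) (hlam : lam₁ ≥ lam₂) (hlam₂ : 0 < lam₂)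
    (g : EuclideanSpace ℝ (Fin 2) → ℝ) (hg : Measurable g)
    (hbound : ∀ a ∈ Metric.closedBall a₀ r,
      m₀ + (lam₂ / 2) * ‖a - a₀‖ ^ 2 ≤ g a ∧ g a ≤ m₀ + (lam₁ / 2) * ‖a - a₀‖ ^ 2) :
    (2 * Real.pi / lam₁) * Real.log (1 + lam₁ * r ^ 2 / (2 * ε)) ≤
        (∫ a in Metric.closedBall a₀ r, 1 / (ε + g a - m₀)) ∧
      (∫ a in Metric.closedBall a₀ r, 1 / (ε + g a - m₀)) ≤
        (2 * Real.pi / lam₂) * Real.log (1 + lam₂ * r ^ 2 / (2 * ε)) := by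
  have hlam₁ : 0 < lam₁ := hlam₂.trans_le hlam
  have hball : volume (closedBall a₀ r) ≠ ⊤ := measure_closedBall_lt_top.ne
  have hg_meas :
      AEStronglyMeasurable (fun a => ε + g a - m₀) (volume.restrict (closedBall a₀ r)) := by
    fun_prop
  have hq_meas (lam : ℝ) : AEStronglyMeasurable (fun a => ε + lam / 2 * ‖a - a₀‖ ^ 2)
      (volume.restrict (closedBall a₀ r)) := by fun_prop
  have hq_ge (a : EuclideanSpace ℝ (Fin 2)) : ε ≤ ε + lam₂ / 2 * ‖a - a₀‖ ^ 2 :=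
    le_add_of_nonneg_right (by positivity)
  constructor
  · rw [← setIntegral_closedBall_one_div_const_add_mul_norm_sq a₀ hr.le hε hlam₁]
    exact setIntegral_one_div_le_of_le measurableSet_closedBall hball hg_meas (hq_meas lam₁) hε
      (fun a ha => by linarith [hq_ge a, (hbound a ha).1])
      (fun a ha => by linarith [(hbound a ha).2])
  · rw [← setIntegral_closedBall_one_div_const_add_mul_norm_sq a₀ hr.le hε hlam₂]
    exact setIntegral_one_div_le_of_le measurableSet_closedBall hball (hq_meas lam₂) hg_meas hε
      (fun a _ => hq_ge a) (fun a ha => by linarith [(hbound a ha).1])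
end

section
/- Let Q = [0,1]² ⊂ ℝ² and let γ₀ : Q → ℝ be continuous, attaining its minimum m₀ < 0 exactly at one point a₀ in the interior of Q; suppose there exist r > 0 and λ₁ ≥ λ₂ > 0 such that the closed disk of radius r about a₀ lies in Q and m₀ + (λ₂/2)|a − a₀|² ≤ γ₀(a) ≤ m₀ + (λ₁/2)|a − a₀|² for all a with |a − a₀| ≤ r. Set τ* = −1/m₀. Then there exist δ ∈ (0, τ*) and constants c > 0, C > 0 such that for every τ with 0 < τ* − τ < δ: c·(−ln(τ* − τ)) ≤ ∫_Q 1/(1 + γ₀(a)·τ) da ≤ C·(−ln(τ* − τ)). -/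
/-!
Write `τ* = -1/m₀`, so that `1 + m₀τ = -m₀(τ* - τ)`. On the disk `B(a₀, r)` the quadratic bounds
squeeze the denominator between `1 + m₀τ + B|a - a₀|²` for `B = λ₂τ*/4` (once `τ ≥ τ*/2`) and
`B = λ₁τ*/2`, and in polar coordinates
`∫_{B(a₀,r)} (A + B|a - a₀|²)⁻¹ da = (π/B) (log (A + Br²) - log A)`, which is
`(π/B) (-log (τ* - τ)) + O(1)` for `A = 1 + m₀τ`. Off the disk `γ₀ ≥ m₀ + η` by compactness and
uniqueness of the minimiser, so there the integrand stays bounded.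
-/

open MeasureTheory Real Set Metric Filter Topology

local notation "ℝ²" => EuclideanSpace ℝ (Fin 2)

theorem integral_closedBall_comp_norm_sub (f : ℝ → ℝ) (x₀ : ℝ²) {r : ℝ} (hr : 0 ≤ r) :
    ∫ a in closedBall x₀ r, f ‖a - x₀‖ = 2 * π * ∫ y in 0..r, y * f y := by
  have hind : ∀ a : ℝ², (closedBall x₀ r).indicator (fun a => f ‖a - x₀‖) a
      = (Iic r).indicator f ‖a - x₀‖ := fun a => by
    by_cases ha : a ∈ closedBall x₀ r
    · rw [indicator_of_mem ha, indicator_of_mem (by simpa [dist_eq_norm] using ha)]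
    · rw [indicator_of_notMem ha, indicator_of_notMem (by simpa [dist_eq_norm] using ha)]
  rw [← integral_indicator measurableSet_closedBall, funext hind,
    integral_sub_right_eq_self (fun a : ℝ² => (Iic r).indicator f ‖a‖),
    integral_fun_norm_addHaar volume ((Iic r).indicator f), finrank_euclideanSpace_fin,
    measureReal_def, EuclideanSpace.volume_ball_fin_two]
  have hrad : ∀ y : ℝ,
      y ^ (2 - 1) • (Iic r).indicator f y = (Iic r).indicator (fun y => y * f y) y := fun y => by
    rw [indicator_mul_right]; simp
  simp_rw [hrad]
  rw [setIntegral_indicator measurableSet_Iic, Ioi_inter_Iic, intervalIntegral.integral_of_le hr]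
  simp [ENNReal.toReal_ofReal pi_pos.le]
  ring

theorem integral_mul_inv_add_mul_sq {A B : ℝ} (hA : 0 < A) (hB : 0 < B) (r : ℝ) :
    ∫ y in 0..r, y * (A + B * y ^ 2)⁻¹ = (log (A + B * r ^ 2) - log A) / (2 * B) := by
  have hpos : ∀ y : ℝ, 0 < A + B * y ^ 2 := fun y => by positivity
  have hderiv : ∀ y ∈ uIcc 0 r,
      HasDerivAt (fun y => log (A + B * y ^ 2) / (2 * B)) (y * (A + B * y ^ 2)⁻¹) y := by
    intro y _
    have h := (((hasDerivAt_pow 2 y).const_mul B).const_add A).log (hpos y).ne'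
    refine (h.div_const (2 * B)).congr_deriv ?_
    field_simp
    ring
  have hcont : Continuous fun y : ℝ => y * (A + B * y ^ 2)⁻¹ :=
    continuous_id.mul (by fun_prop (disch := exact fun y => (hpos y).ne'))
  rw [intervalIntegral.integral_eq_sub_of_hasDerivAt hderiv (hcont.intervalIntegrable 0 r)]
  simp [sub_div]

theorem integral_closedBall_inv_add_mul_norm_sub_sq {A B r : ℝ} (hA : 0 < A) (hB : 0 < B)
    (hr : 0 ≤ r) (x₀ : ℝ²) :
    ∫ a in closedBall x₀ r, (A + B * ‖a - x₀‖ ^ 2)⁻¹ = π / B * (log (A + B * r ^ 2) - log A) := by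
  rw [integral_closedBall_comp_norm_sub (fun y => (A + B * y ^ 2)⁻¹) x₀ hr,
    integral_mul_inv_add_mul_sq hA hB]
  field_simp

theorem integrableOn_closedBall_inv_add_mul_norm_sub_sq {A B : ℝ} (hA : 0 < A) (hB : 0 ≤ B)
    (x₀ : ℝ²) (r : ℝ) :
    IntegrableOn (fun a : ℝ² => (A + B * ‖a - x₀‖ ^ 2)⁻¹) (closedBall x₀ r) :=
  (Continuous.continuousOn (by fun_prop (disch := intro a; positivity))).integrableOn_compact
    (isCompact_closedBall x₀ r)

theorem le_setIntegral_inv_of_le_add_mul_norm_sub_sq {Q : Set ℝ²} {g : ℝ² → ℝ} {x₀ : ℝ²}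
    {A B r : ℝ} (hA : 0 < A) (hB : 0 < B) (hr : 0 ≤ r) (hQ : MeasurableSet Q)
    (hball : closedBall x₀ r ⊆ Q) (hint : IntegrableOn (fun a => (g a)⁻¹) Q)
    (hpos : ∀ a ∈ Q, 0 < g a)
    (hle : ∀ a ∈ closedBall x₀ r, g a ≤ A + B * ‖a - x₀‖ ^ 2) :
    π / B * (log (A + B * r ^ 2) - log A) ≤ ∫ a in Q, (g a)⁻¹ :=
  calc π / B * (log (A + B * r ^ 2) - log A)
      = ∫ a in closedBall x₀ r, (A + B * ‖a - x₀‖ ^ 2)⁻¹ :=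
        (integral_closedBall_inv_add_mul_norm_sub_sq hA hB hr x₀).symm
    _ ≤ ∫ a in closedBall x₀ r, (g a)⁻¹ :=
        setIntegral_mono_on (integrableOn_closedBall_inv_add_mul_norm_sub_sq hA hB.le x₀ r)
          (hint.mono_set hball) measurableSet_closedBall
          fun a ha => inv_anti₀ (hpos a (hball ha)) (hle a ha)
    _ ≤ ∫ a in Q, (g a)⁻¹ :=
        setIntegral_mono_set hint
          (ae_restrict_of_forall_mem hQ fun a ha => (inv_pos.2 (hpos a ha)).le) hball.eventuallyLE

theorem setIntegral_inv_le_of_add_mul_norm_sub_sq_le {Q : Set ℝ²} {g : ℝ² → ℝ} {x₀ : ℝ²}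
    {A B r κ : ℝ} (hA : 0 < A) (hB : 0 < B) (hr : 0 ≤ r) (hκ : 0 < κ) (hQ : MeasurableSet Q)
    (hQfin : volume Q ≠ ⊤) (hball : closedBall x₀ r ⊆ Q)
    (hint : IntegrableOn (fun a => (g a)⁻¹) Q)
    (hge : ∀ a ∈ closedBall x₀ r, A + B * ‖a - x₀‖ ^ 2 ≤ g a)
    (hgap : ∀ a ∈ Q \ closedBall x₀ r, κ ≤ g a) :
    ∫ a in Q, (g a)⁻¹ ≤ π / B * (log (A + B * r ^ 2) - log A) + volume.real Q / κ := by
  have hsplit : ∫ a in Q, (g a)⁻¹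
      = (∫ a in closedBall x₀ r, (g a)⁻¹) + ∫ a in Q \ closedBall x₀ r, (g a)⁻¹ := by
    rw [← setIntegral_union disjoint_sdiff_right (hQ.diff measurableSet_closedBall)
      (hint.mono_set hball) (hint.mono_set sdiff_subset), union_sdiff_cancel hball]
  have hinner : ∫ a in closedBall x₀ r, (g a)⁻¹ ≤ π / B * (log (A + B * r ^ 2) - log A) := by
    rw [← integral_closedBall_inv_add_mul_norm_sub_sq hA hB hr x₀]
    exact setIntegral_mono_on (hint.mono_set hball)
      (integrableOn_closedBall_inv_add_mul_norm_sub_sq hA hB.le x₀ r) measurableSet_closedBall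
      fun a ha => inv_anti₀ (by positivity) (hge a ha)
  have houter : ∫ a in Q \ closedBall x₀ r, (g a)⁻¹ ≤ volume.real Q / κ :=
    calc ∫ a in Q \ closedBall x₀ r, (g a)⁻¹ ≤ ∫ _ in Q \ closedBall x₀ r, κ⁻¹ :=
          setIntegral_mono_on (hint.mono_set sdiff_subset)
            (integrableOn_const (measure_ne_top_of_subset sdiff_subset hQfin))
            (hQ.diff measurableSet_closedBall) fun a ha => inv_anti₀ hκ (hgap a ha)
      _ = volume.real (Q \ closedBall x₀ r) / κ := by
          rw [setIntegral_const, smul_eq_mul, div_eq_mul_inv]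
      _ ≤ volume.real Q / κ :=
          div_le_div_of_nonneg_right (measureReal_mono sdiff_subset hQfin) hκ.le
  linarith

theorem EuclideanSpace.isCompact_setOf_forall_mem {ι : Type*} [Fintype ι] {s : ι → Set ℝ}
    (hs : ∀ i, IsCompact (s i)) : IsCompact {a : EuclideanSpace ℝ ι | ∀ i, a i ∈ s i} := by
  have h := (EuclideanSpace.equiv ι ℝ).toHomeomorph.isCompact_preimage.2 (isCompact_univ_pi hs)
  simpa [Set.preimage, Set.mem_pi] using h

theorem IsCompact.exists_forall_add_le_of_forall_lt {X : Type*} [TopologicalSpace X]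
    {K : Set X} (hK : IsCompact K) {f : X → ℝ} (hf : ContinuousOn f K) {m : ℝ}
    (h : ∀ x ∈ K, m < f x) : ∃ η > 0, ∀ x ∈ K, m + η ≤ f x := by
  rcases K.eq_empty_or_nonempty with rfl | hne
  · exact ⟨1, one_pos, by simp⟩
  obtain ⟨x₁, hx₁, hmin⟩ := hK.exists_isMinOn hne hf
  exact ⟨f x₁ - m, sub_pos.2 (h x₁ hx₁), fun x hx => by linarith [isMinOn_iff.1 hmin x hx]⟩

theorem tendsto_neg_log_sub_nhdsLT (a : ℝ) :
    Tendsto (fun x => -log (a - x)) (𝓝[<] a) atTop := by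
  have h : Tendsto (fun x => a - x) (𝓝[<] a) (𝓝[>] 0) := by
    refine tendsto_nhdsWithin_of_tendsto_nhds_of_eventually_within _ ?_ ?_
    · simpa using ((continuous_sub_left a).tendsto a).mono_left nhdsWithin_le_nhds
    · exact eventually_mem_nhdsWithin.mono fun x (hx : x < a) => sub_pos.2 hx
  exact tendsto_neg_atBot_atTop.comp (tendsto_log_nhdsGT_zero.comp h)

theorem Filter.Tendsto.eventually_add_mul_le_mul {α : Type*} {l : Filter α} {L : α → ℝ}
    (hL : Tendsto L l atTop) (k : ℝ) {b C : ℝ} (hbC : b < C) :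
    ∀ᶠ x in l, k + b * L x ≤ C * L x := by
  filter_upwards [hL.eventually_ge_atTop (k / (C - b))] with x hx
  nlinarith [(div_le_iff₀ (sub_pos.2 hbC)).1 hx]

theorem Filter.Tendsto.eventually_mul_le_add_mul {α : Type*} {l : Filter α} {L : α → ℝ}
    (hL : Tendsto L l atTop) (k : ℝ) {c b : ℝ} (hcb : c < b) :
    ∀ᶠ x in l, c * L x ≤ k + b * L x :=
  (hL.eventually_add_mul_le_mul (-k) (neg_lt_neg hcb)).mono fun x hx => by linarith

theorem exists_mem_Ioo_of_eventually_nhdsLT {p : ℝ → Prop} {a : ℝ} (ha : 0 < a)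
    (h : ∀ᶠ x in 𝓝[<] a, p x) : ∃ δ ∈ Ioo 0 a, ∀ x, 0 < a - x → a - x < δ → p x := by
  obtain ⟨l, hl, hsub⟩ := mem_nhdsLT_iff_exists_Ioo_subset.1 h
  refine ⟨min (a - l) (a / 2), ⟨lt_min (sub_pos.2 hl) (half_pos ha),
    (min_le_right _ _).trans_lt (half_lt_self ha)⟩, fun x hx hxδ => hsub ⟨?_, ?_⟩⟩
  · linarith [min_le_left (a - l) (a / 2)]
  · linarith

theorem one_add_mul_pos_of_le {γ m₀ τ : ℝ} (hm₀ : m₀ < 0) (hγ : m₀ ≤ γ) (hτ₀ : 0 ≤ τ)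
    (hτ : τ < -1 / m₀) : 0 < 1 + γ * τ := by
  nlinarith [(lt_div_iff_of_neg hm₀).1 hτ, mul_le_mul_of_nonneg_right hγ hτ₀]

theorem log_one_add_mul_eq {m₀ τ : ℝ} (hm₀ : m₀ < 0) (hτ : τ < -1 / m₀) :
    log (1 + m₀ * τ) = log (-m₀) + log (-1 / m₀ - τ) := by
  rw [← log_mul (by linarith) (sub_pos.2 hτ).ne']
  congr 1
  field_simp [hm₀.ne]
  ring

section BlowUp

variable {Q : Set ℝ²} {γ₀ : ℝ² → ℝ} {m₀ : ℝ} {a₀ : ℝ²} {r : ℝ}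

theorem integrableOn_inv_one_add_mul (hQc : IsCompact Q) (hcont : ContinuousOn γ₀ Q) {τ : ℝ}
    (hpos : ∀ a ∈ Q, 0 < 1 + γ₀ a * τ) : IntegrableOn (fun a => (1 + γ₀ a * τ)⁻¹) Q :=
  ((continuousOn_const.add (hcont.mul continuousOn_const)).inv₀ fun a ha => (hpos a ha).ne')
    |>.integrableOn_compact hQc

theorem eventually_mul_neg_log_le_integral (hQc : IsCompact Q) (hcont : ContinuousOn γ₀ Q)
    (hm₀ : m₀ < 0) (hγ₀ : ∀ a ∈ Q, m₀ ≤ γ₀ a) {lam₁ : ℝ} (hr : 0 < r) (hlam₁ : 0 < lam₁)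
    (hball : closedBall a₀ r ⊆ Q)
    (hquad : ∀ a ∈ closedBall a₀ r, γ₀ a ≤ m₀ + lam₁ / 2 * ‖a - a₀‖ ^ 2) :
    ∀ᶠ τ in 𝓝[<] (-1 / m₀),
      π / (lam₁ * (-1 / m₀)) * -log (-1 / m₀ - τ) ≤ ∫ a in Q, 1 / (1 + γ₀ a * τ) := by
  set τs := -1 / m₀
  have hτs : 0 < τs := div_pos_of_neg_of_neg (by norm_num) hm₀
  set B := lam₁ * τs / 2 with hB_def
  have hB : 0 < B := by positivity
  have hcB : π / (lam₁ * τs) < π / B :=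
    div_lt_div_of_pos_left pi_pos hB (by rw [hB_def]; linarith)
  filter_upwards [Ioo_mem_nhdsLT hτs, (tendsto_neg_log_sub_nhdsLT τs).eventually_mul_le_add_mul
    (π / B * (log (B * r ^ 2) - log (-m₀))) hcB] with τ ⟨hτ₀, hτ⟩ hτL
  have hA : 0 < 1 + m₀ * τ := one_add_mul_pos_of_le hm₀ le_rfl hτ₀.le hτ
  have hpos : ∀ a ∈ Q, 0 < 1 + γ₀ a * τ := fun a ha =>
    one_add_mul_pos_of_le hm₀ (hγ₀ a ha) hτ₀.le hτ
  have hle : ∀ a ∈ closedBall a₀ r, 1 + γ₀ a * τ ≤ 1 + m₀ * τ + B * ‖a - a₀‖ ^ 2 := fun a ha => by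
    rw [hB_def]
    nlinarith [mul_le_mul_of_nonneg_right (hquad a ha) hτ₀.le,
      mul_le_mul_of_nonneg_left hτ.le (by positivity : 0 ≤ lam₁ / 2 * ‖a - a₀‖ ^ 2)]
  have hlog : log (B * r ^ 2) ≤ log (1 + m₀ * τ + B * r ^ 2) :=
    log_le_log (by positivity) (by linarith)
  simp only [one_div]
  calc π / (lam₁ * τs) * -log (τs - τ)
      ≤ π / B * (log (B * r ^ 2) - log (-m₀)) + π / B * -log (τs - τ) := hτL
    _ = π / B * (log (B * r ^ 2) - (log (-m₀) + log (τs - τ))) := by ring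
    _ ≤ π / B * (log (1 + m₀ * τ + B * r ^ 2) - log (1 + m₀ * τ)) := by
        rw [log_one_add_mul_eq hm₀ hτ]
        gcongr
    _ ≤ ∫ a in Q, (1 + γ₀ a * τ)⁻¹ :=
        le_setIntegral_inv_of_le_add_mul_norm_sub_sq hA hB hr.le hQc.measurableSet hball
          (integrableOn_inv_one_add_mul hQc hcont hpos) hpos hle

theorem eventually_integral_le_mul_neg_log (hQc : IsCompact Q) (hcont : ContinuousOn γ₀ Q)
    (hm₀ : m₀ < 0) (hγ₀ : ∀ a ∈ Q, m₀ ≤ γ₀ a) {lam₂ η : ℝ} (hr : 0 ≤ r) (hlam₂ : 0 < lam₂)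
    (hη : 0 < η) (hball : closedBall a₀ r ⊆ Q)
    (hquad : ∀ a ∈ closedBall a₀ r, m₀ + lam₂ / 2 * ‖a - a₀‖ ^ 2 ≤ γ₀ a)
    (hgap : ∀ a ∈ Q \ closedBall a₀ r, m₀ + η ≤ γ₀ a) :
    ∀ᶠ τ in 𝓝[<] (-1 / m₀),
      ∫ a in Q, 1 / (1 + γ₀ a * τ) ≤ 8 * π / (lam₂ * (-1 / m₀)) * -log (-1 / m₀ - τ) := by
  set τs := -1 / m₀
  have hτs : 0 < τs := div_pos_of_neg_of_neg (by norm_num) hm₀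
  set B := lam₂ * τs / 4 with hB_def
  have hB : 0 < B := by positivity
  set κ := η * τs / 2 with hκ_def
  have hκ : 0 < κ := by positivity
  have hBC : π / B < 8 * π / (lam₂ * τs) := by
    rw [show 8 * π / (lam₂ * τs) = 2 * (π / B) by field_simp; ring]
    linarith [div_pos pi_pos hB]
  filter_upwards [Ioo_mem_nhdsLT (half_lt_self hτs),
    (tendsto_neg_log_sub_nhdsLT τs).eventually_add_mul_le_mul
      (π / B * (log (1 + B * r ^ 2) - log (-m₀)) + volume.real Q / κ) hBC] with τ ⟨hτhalf, hτ⟩ hτL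
  have hτ₀ : 0 ≤ τ := by linarith
  have hA : 0 < 1 + m₀ * τ := one_add_mul_pos_of_le hm₀ le_rfl hτ₀ hτ
  have hpos : ∀ a ∈ Q, 0 < 1 + γ₀ a * τ := fun a ha =>
    one_add_mul_pos_of_le hm₀ (hγ₀ a ha) hτ₀ hτ
  have hge : ∀ a ∈ closedBall a₀ r, 1 + m₀ * τ + B * ‖a - a₀‖ ^ 2 ≤ 1 + γ₀ a * τ := fun a ha => by
    rw [hB_def]
    nlinarith [mul_le_mul_of_nonneg_right (hquad a ha) hτ₀,
      mul_le_mul_of_nonneg_left hτhalf.le (by positivity : 0 ≤ lam₂ / 2 * ‖a - a₀‖ ^ 2)]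
  have hκ_le : ∀ a ∈ Q \ closedBall a₀ r, κ ≤ 1 + γ₀ a * τ := fun a ha => by
    rw [hκ_def]
    nlinarith [mul_le_mul_of_nonneg_right (hgap a ha) hτ₀,
      mul_le_mul_of_nonneg_left hτhalf.le hη.le]
  have hlog : log (1 + m₀ * τ + B * r ^ 2) ≤ log (1 + B * r ^ 2) :=
    log_le_log (by positivity) (by nlinarith)
  simp only [one_div]
  calc ∫ a in Q, (1 + γ₀ a * τ)⁻¹
      ≤ π / B * (log (1 + m₀ * τ + B * r ^ 2) - log (1 + m₀ * τ)) + volume.real Q / κ :=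
        setIntegral_inv_le_of_add_mul_norm_sub_sq_le hA hB hr hκ hQc.measurableSet
          hQc.measure_lt_top.ne hball (integrableOn_inv_one_add_mul hQc hcont hpos) hge hκ_le
    _ ≤ π / B * (log (1 + B * r ^ 2) - (log (-m₀) + log (τs - τ))) + volume.real Q / κ := by
        rw [log_one_add_mul_eq hm₀ hτ]
        gcongr
    _ = π / B * (log (1 + B * r ^ 2) - log (-m₀)) + volume.real Q / κ
          + π / B * -log (τs - τ) := by ring
    _ ≤ 8 * π / (lam₂ * τs) * -log (τs - τ) := hτL

end BlowUp

theorem log_blowup_rate_first_integral_general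
    (Q : Set (EuclideanSpace ℝ (Fin 2)))
    (hQ : Q = {a : EuclideanSpace ℝ (Fin 2) | ∀ i, a i ∈ Set.Icc (0:ℝ) 1})
    (γ₀ : EuclideanSpace ℝ (Fin 2) → ℝ) (hcont : ContinuousOn γ₀ Q)
    (m₀ : ℝ) (hm₀neg : m₀ < 0)
    (a₀ : EuclideanSpace ℝ (Fin 2))
    (hmin : γ₀ a₀ = m₀)
    (hunique : ∀ a ∈ Q, a ≠ a₀ → m₀ < γ₀ a)
    (r lam₁ lam₂ : ℝ) (hr : 0 < r) (hlam : lam₁ ≥ lam₂) (hlam₂ : 0 < lam₂)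
    (hball : Metric.closedBall a₀ r ⊆ Q)
    (hquad : ∀ a ∈ Metric.closedBall a₀ r,
      m₀ + (lam₂ / 2) * ‖a - a₀‖ ^ 2 ≤ γ₀ a ∧ γ₀ a ≤ m₀ + (lam₁ / 2) * ‖a - a₀‖ ^ 2) :
    ∃ δ ∈ Set.Ioo (0:ℝ) (-1 / m₀), ∃ c > (0:ℝ), ∃ C > (0:ℝ),
      ∀ τ : ℝ, 0 < -1 / m₀ - τ → -1 / m₀ - τ < δ →
        c * (-Real.log (-1 / m₀ - τ)) ≤ (∫ a in Q, 1 / (1 + γ₀ a * τ)) ∧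
        (∫ a in Q, 1 / (1 + γ₀ a * τ)) ≤ C * (-Real.log (-1 / m₀ - τ)) := by
  have hτs : 0 < -1 / m₀ := div_pos_of_neg_of_neg (by norm_num) hm₀neg
  have hQc : IsCompact Q := hQ ▸ EuclideanSpace.isCompact_setOf_forall_mem fun _ => isCompact_Icc
  have hγ₀ : ∀ a ∈ Q, m₀ ≤ γ₀ a := fun a ha =>
    (eq_or_ne a a₀).elim (fun h => h ▸ hmin.ge) fun h => (hunique a ha h).le
  obtain ⟨η, hη, hgap⟩ := (hQc.diff isOpen_ball).exists_forall_add_le_of_forall_lt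
    (hcont.mono sdiff_subset) fun a ha => hunique a ha.1 fun h => (h ▸ ha.2) (mem_ball_self hr)
  have hlam₁ : 0 < lam₁ := hlam₂.trans_le hlam
  have hlower := eventually_mul_neg_log_le_integral hQc hcont hm₀neg hγ₀ hr hlam₁ hball
    fun a ha => (hquad a ha).2
  have hupper := eventually_integral_le_mul_neg_log hQc hcont hm₀neg hγ₀ hr.le hlam₂ hη hball
    (fun a ha => (hquad a ha).1)
    fun a ha => hgap a ⟨ha.1, fun h => ha.2 (ball_subset_closedBall h)⟩
  obtain ⟨δ, hδ, hδτ⟩ := exists_mem_Ioo_of_eventually_nhdsLT hτs (hlower.and hupper)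
  exact ⟨δ, hδ, _, div_pos pi_pos (mul_pos hlam₁ hτs), _,
    div_pos (by positivity) (mul_pos hlam₂ hτs), hδτ⟩

/-- estimate (4.5) of Chen–Sarria, following Constantin.
Under the quadratic nondegeneracy hypothesis on `γ₀` at its unique negative
minimum `m₀` (attained at `a₀` in the interior of `Q = [0,1]²`), the integral
`∫_Q da/(1 + γ₀(a)τ)` blows up logarithmically as `τ ↗ τ* = −1/m₀`.
Integrals over `Q` are with respect to 2-dimensional Lebesgue measure. -/
theorem log_blowup_rate_first_integral
    (Q : Set (EuclideanSpace ℝ (Fin 2)))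
    (hQ : Q = {a : EuclideanSpace ℝ (Fin 2) | ∀ i, a i ∈ Set.Icc (0:ℝ) 1})
    (γ₀ : EuclideanSpace ℝ (Fin 2) → ℝ) (hcont : ContinuousOn γ₀ Q)
    (m₀ : ℝ) (hm₀neg : m₀ < 0)
    (a₀ : EuclideanSpace ℝ (Fin 2)) (ha₀ : a₀ ∈ interior Q)
    (hmin : γ₀ a₀ = m₀)
    (hunique : ∀ a ∈ Q, a ≠ a₀ → m₀ < γ₀ a)
    (r lam₁ lam₂ : ℝ) (hr : 0 < r) (hlam : lam₁ ≥ lam₂) (hlam₂ : 0 < lam₂)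
    (hball : Metric.closedBall a₀ r ⊆ Q)
    (hquad : ∀ a ∈ Metric.closedBall a₀ r,
      m₀ + (lam₂ / 2) * ‖a - a₀‖ ^ 2 ≤ γ₀ a ∧ γ₀ a ≤ m₀ + (lam₁ / 2) * ‖a - a₀‖ ^ 2) :
    ∃ δ ∈ Set.Ioo (0:ℝ) (-1 / m₀), ∃ c > (0:ℝ), ∃ C > (0:ℝ),
      ∀ τ : ℝ, 0 < -1 / m₀ - τ → -1 / m₀ - τ < δ →
        c * (-Real.log (-1 / m₀ - τ)) ≤ (∫ a in Q, 1 / (1 + γ₀ a * τ)) ∧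
        (∫ a in Q, 1 / (1 + γ₀ a * τ)) ≤ C * (-Real.log (-1 / m₀ - τ)) :=
  log_blowup_rate_first_integral_general Q hQ γ₀ hcont m₀ hm₀neg a₀ hmin hunique r lam₁ lam₂ hr hlam
    hlam₂ hball hquad
end

section
/- Let α > 0, τ* ∈ (0,∞), let g : [0,τ*) → ℝ be continuous with g(μ) > 0 for all μ, and suppose T := ∫₀^{τ*} g(μ) dμ is finite with α ≥ 1/T. Let τ : [0,S) → [0,τ*) be differentiable with τ(0) = 0 and τ'(t) = e^{−αt}/g(τ(t)) for all t ∈ [0,S), S ∈ (0,∞]. Then ∫₀^{τ(t)} g(μ) dμ < 1/α ≤ T for every t ∈ [0,S). Moreover: (i) if α = 1/T and S = ∞, then τ(t) → τ* as t → ∞; (ii) if α > 1/T and S = ∞, then τ(t) → τ₁ as t → ∞, where τ₁ is the unique point of (0, τ*) with ∫₀^{τ₁} g(μ) dμ = 1/α. -/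
/-!
Let `F x = ∫₀^x g`; it is continuous and strictly increasing on `[0, τ*]`, with `F τ* = T`.
Separating variables in `τ' = e^{-αt} / g(τ)` gives `F (τ t) = (1 - e^{-αt}) / α < 1/α ≤ T`.
As `t → ∞` the right-hand side tends to `1/α`, and since `F` is a homeomorphism of the compact
interval `[0, τ*]` onto its image, `τ t` tends to `F⁻¹ (1/α)`: this is `τ*` when `α = 1/T` and
a point of `(0, τ*)` when `α > 1/T`.
-/

open MeasureTheory Set Filter Topology

theorem tendsto_of_tendsto_comp_of_injOn {X Y ι : Type*} [TopologicalSpace X]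
    [TopologicalSpace Y] [T2Space Y] {K : Set X} {F : X → Y} {u : ι → X} {l : Filter ι} {x : X}
    (hK : IsCompact K) (hF : ContinuousOn F K) (hinj : InjOn F K) (hx : x ∈ K)
    (hu : ∀ᶠ i in l, u i ∈ K) (h : Tendsto (F ∘ u) l (𝓝 (F x))) : Tendsto u l (𝓝 x) := by
  refine hK.tendsto_nhds_of_unique_mapClusterPt hu fun y hy hclus => hinj hy hx ?_
  have : NeBot (𝓝 y ⊓ map u l) := hclus
  have hFy : Tendsto F (𝓝 y ⊓ map u l) (𝓝 (F y)) :=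
    (hF y hy).mono_left (inf_le_inf_left _ (le_principal_iff.2 hu))
  exact tendsto_nhds_unique hFy ((tendsto_map'_iff.2 h).mono_left inf_le_right)

theorem strictMonoOn_integral_of_pos {g : ℝ → ℝ} {a b : ℝ} (hg : IntegrableOn g (Icc a b))
    (hpos : ∀ x ∈ Ioo a b, 0 < g x) : StrictMonoOn (fun x => ∫ μ in a..x, g μ) (Icc a b) := by
  have hint : ∀ x ∈ Icc a b, ∀ y ∈ Icc a b, IntervalIntegrable g volume x y := fun x hx y hy =>
    (hg.mono_set (uIcc_subset_Icc hx hy)).intervalIntegrable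
  intro x hx y hy hxy
  have hpos_xy : 0 < ∫ μ in x..y, g μ :=
    intervalIntegral.intervalIntegral_pos_of_pos_on (hint x hx y hy)
      (fun z hz => hpos z ⟨hx.1.trans_lt hz.1, hz.2.trans_le hy.2⟩) hxy
  have hax := hint a (left_mem_Icc.2 (hx.1.trans hx.2)) x hx
  show ∫ μ in a..x, g μ < ∫ μ in a..y, g μ
  rw [← intervalIntegral.integral_add_adjacent_intervals hax (hint x hx y hy)]
  linarith

theorem integral_eq_sub_of_hasDerivAt_div_comp {g τ h h' : ℝ → ℝ} {a t c b : ℝ} (hat : a ≤ t)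
    (hg : ContinuousOn g (Ico c b)) (hg0 : ∀ y ∈ Ico c b, g y ≠ 0)
    (hmap : ∀ s ∈ Icc a t, τ s ∈ Ico c b)
    (hτ : ∀ s ∈ Icc a t, HasDerivAt τ (h' s / g (τ s)) s)
    (hh : ∀ s ∈ Icc a t, HasDerivAt h (h' s) s) :
    ∫ y in τ a..τ t, g y = h t - h a := by
  obtain ⟨hca, hab⟩ := hmap a (left_mem_Icc.2 hat)
  obtain ⟨hct, htb⟩ := hmap t (right_mem_Icc.2 hat)
  have hcb : c < b := hca.trans_lt hab
  -- extend `g` to the left of `c` so that its primitive is differentiable at `c` as well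
  set g' : ℝ → ℝ := fun y => g (max y c)
  have hg'_eq : ∀ y, c ≤ y → g' y = g y := fun y hy => by simp only [g', max_eq_left hy]
  have hg' : ContinuousOn g' (Iio b) := hg.comp (continuous_id.max continuous_const).continuousOn
    fun y hy => ⟨le_max_right _ _, max_lt hy hcb⟩
  have hint : ∀ y < b, IntervalIntegrable g' volume c y := fun y hy =>
    (hg'.mono fun _ hz => hz.2.trans_lt (max_lt hcb hy)).intervalIntegrable
  set G : ℝ → ℝ := fun y => ∫ μ in c..y, g' μ
  have hG : ∀ y < b, HasDerivAt G (g' y) y := fun y hy =>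
    intervalIntegral.integral_hasDerivAt_right (hint y hy)
      (hg'.stronglyMeasurableAtFilter isOpen_Iio y hy) (hg'.continuousAt (Iio_mem_nhds hy))
  have hGτ : ∀ s ∈ Icc a t, HasDerivAt (fun s => G (τ s) - h s) 0 s := fun s hs => by
    have hcomp := (hG _ (hmap s hs).2).comp s (hτ s hs)
    rw [hg'_eq _ (hmap s hs).1, mul_div_cancel₀ _ (hg0 _ (hmap s hs))] at hcomp
    exact (hcomp.sub (hh s hs)).congr_deriv (sub_self _)
  have hconst : G (τ t) - h t = G (τ a) - h a :=
    constant_of_has_deriv_right_zero (fun s hs => (hGτ s hs).continuousAt.continuousWithinAt)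
      (fun s hs => (hGτ s (Ico_subset_Icc_self hs)).hasDerivWithinAt) t (right_mem_Icc.2 hat)
  have hgg' : EqOn g g' (uIcc (τ a) (τ t)) := fun y hy =>
    (hg'_eq y ((le_min hca hct).trans hy.1)).symm
  rw [intervalIntegral.integral_congr hgg',
    ← intervalIntegral.integral_interval_sub_left (hint _ htb) (hint _ hab)]
  linarith

theorem integral_eq_of_hasDerivAt_exp_div_comp {g τ : ℝ → ℝ} {α b t : ℝ} (hα : α ≠ 0) (ht : 0 ≤ t)
    (hg : ContinuousOn g (Ico 0 b)) (hg0 : ∀ y ∈ Ico 0 b, g y ≠ 0) (hτ0 : τ 0 = 0)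
    (hmap : ∀ s ∈ Icc 0 t, τ s ∈ Ico 0 b)
    (hτ : ∀ s ∈ Icc 0 t, HasDerivAt τ (Real.exp (-α * s) / g (τ s)) s) :
    ∫ y in 0..τ t, g y = (1 - Real.exp (-α * t)) / α := by
  have hexp (s : ℝ) : HasDerivAt (fun s => -Real.exp (-α * s) / α) (Real.exp (-α * s)) s :=
    (((hasDerivAt_id' s).const_mul (-α)).exp.neg.div_const α).congr_deriv (by field_simp)
  have := integral_eq_sub_of_hasDerivAt_div_comp ht hg hg0 hmap hτ fun s _ => hexp s
  rw [hτ0] at this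
  rw [this, mul_zero, Real.exp_zero]
  ring

theorem tendsto_one_sub_exp_neg_mul_div {α : ℝ} (hα : 0 < α) :
    Tendsto (fun t => (1 - Real.exp (-α * t)) / α) atTop (𝓝 (1 / α)) := by
  have hexp : Tendsto (fun t => Real.exp (-α * t)) atTop (𝓝 0) :=
    Real.tendsto_exp_atBot.comp (tendsto_id.const_mul_atTop_of_neg (neg_neg_of_pos hα))
  simpa using (hexp.const_sub 1).div_const α

theorem time_change_global_when_strong_damping_general
    (α τstar : ℝ) (hα : 0 < α) (hτstar : 0 < τstar)
    (g : ℝ → ℝ) (hgcont : ContinuousOn g (Set.Ico 0 τstar))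
    (hgpos : ∀ μ ∈ Set.Ico (0:ℝ) τstar, 0 < g μ)
    (hgint : MeasureTheory.IntegrableOn g (Set.Ioo 0 τstar))
    (T : ℝ) (hT : T = ∫ μ in Set.Ioo (0:ℝ) τstar, g μ)
    (hαT : 1 / T ≤ α)
    (S : EReal)
    (τ : ℝ → ℝ)
    (hmap : ∀ t : ℝ, 0 ≤ t → (t : EReal) < S → τ t ∈ Set.Ico 0 τstar)
    (hτ0 : τ 0 = 0)
    (hdiff : ∀ t : ℝ, 0 ≤ t → (t : EReal) < S → DifferentiableAt ℝ τ t)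
    (hode : ∀ t : ℝ, 0 ≤ t → (t : EReal) < S →
      deriv τ t = Real.exp (-α * t) / g (τ t)) :
    (∀ t : ℝ, 0 ≤ t → (t : EReal) < S →
        (∫ μ in (0:ℝ)..(τ t), g μ) < 1 / α ∧ 1 / α ≤ T) ∧
    (S = ⊤ → α = 1 / T → Filter.Tendsto τ Filter.atTop (nhds τstar)) ∧
    (S = ⊤ → 1 / T < α → ∃ τ₁ ∈ Set.Ioo (0:ℝ) τstar,
      (∫ μ in (0:ℝ)..τ₁, g μ) = 1 / α ∧
      (∀ τ₂ ∈ Set.Ioo (0:ℝ) τstar, (∫ μ in (0:ℝ)..τ₂, g μ) = 1 / α → τ₂ = τ₁) ∧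
      Filter.Tendsto τ Filter.atTop (nhds τ₁)) := by
  set F : ℝ → ℝ := fun x => ∫ μ in (0:ℝ)..x, g μ
  have hgIcc : IntegrableOn g (Icc 0 τstar) := (integrableOn_Icc_iff_integrableOn_Ioo).2 hgint
  have hFmono : StrictMonoOn F (Icc 0 τstar) :=
    strictMonoOn_integral_of_pos hgIcc fun x hx => hgpos x (Ioo_subset_Ico_self hx)
  have hFcont : ContinuousOn F (Icc 0 τstar) := uIcc_of_le hτstar.le ▸
    intervalIntegral.continuousOn_primitive_interval (uIcc_of_le hτstar.le ▸ hgIcc)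
  have hF0 : F 0 = 0 := intervalIntegral.integral_same
  have hFT : F τstar = T := by
    rw [hT, ← integral_Ioc_eq_integral_Ioo, ← intervalIntegral.integral_of_le hτstar.le]
  have hT0 : 0 < T :=
    hF0 ▸ hFT ▸ hFmono (left_mem_Icc.2 hτstar.le) (right_mem_Icc.2 hτstar.le) hτstar
  have hFτ : ∀ t : ℝ, 0 ≤ t → (t : EReal) < S → F (τ t) = (1 - Real.exp (-α * t)) / α := by
    intro t ht htS
    have hsub : ∀ s ∈ Icc (0 : ℝ) t, 0 ≤ s ∧ (s : EReal) < S := fun s hs =>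
      ⟨hs.1, (EReal.coe_le_coe_iff.2 hs.2).trans_lt htS⟩
    refine integral_eq_of_hasDerivAt_exp_div_comp hα.ne' ht hgcont (fun y hy => (hgpos y hy).ne')
      hτ0 (fun s hs => hmap s (hsub s hs).1 (hsub s hs).2) fun s hs => ?_
    obtain ⟨hs0, hsS⟩ := hsub s hs
    exact hode s hs0 hsS ▸ (hdiff s hs0 hsS).hasDerivAt
  have hconv : S = ⊤ → ∀ L ∈ Icc 0 τstar, F L = 1 / α → Tendsto τ atTop (𝓝 L) := by
    rintro rfl L hL hFL
    have hτ_mem : ∀ᶠ t in atTop, τ t ∈ Icc 0 τstar := (eventually_ge_atTop 0).mono fun t ht =>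
      Ico_subset_Icc_self (hmap t ht (EReal.coe_lt_top t))
    refine tendsto_of_tendsto_comp_of_injOn isCompact_Icc hFcont hFmono.injOn hL hτ_mem ?_
    rw [hFL]
    refine (tendsto_one_sub_exp_neg_mul_div hα).congr' ?_
    filter_upwards [eventually_ge_atTop 0] with t ht using (hFτ t ht (EReal.coe_lt_top t)).symm
  have hαT' : 1 / α ≤ T := (one_div_le hT0 hα).1 hαT
  refine ⟨fun t ht htS => ⟨?_, hαT'⟩, fun hS hαT => hconv hS _ (right_mem_Icc.2 hτstar.le) ?_,
    fun hS hαT => ?_⟩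
  · change F (τ t) < 1 / α
    rw [hFτ t ht htS]
    gcongr
    linarith [Real.exp_pos (-α * t)]
  · rw [hFT, hαT, one_div_one_div]
  · obtain ⟨τ₁, hτ₁, hFτ₁⟩ := intermediate_value_Ioo hτstar.le hFcont
      ⟨hF0 ▸ one_div_pos.2 hα, hFT ▸ (one_div_lt hT0 hα).1 hαT⟩
    exact ⟨τ₁, hτ₁, hFτ₁, fun τ₂ hτ₂ hFτ₂ => hFmono.injOn (Ioo_subset_Icc_self hτ₂)
      (Ioo_subset_Icc_self hτ₁) (hFτ₂.trans hFτ₁.symm), hconv hS τ₁ (Ioo_subset_Icc_self hτ₁) hFτ₁⟩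

/-- Cases 2 and 3 of Theorem 2.2 of Chen–Sarria, at the
level of the time-change ODE. If `T = ∫₀^{τ*} g` is finite and `α ≥ 1/T`,
then `∫₀^{τ(t)} g < 1/α ≤ T` for all `t`; if moreover `S = ∞`, then for
`α = 1/T` one has `τ(t) → τ*` as `t → ∞`, while for `α > 1/T` one has
`τ(t) → τ₁`, the unique point of `(0, τ*)` with `∫₀^{τ₁} g = 1/α`.
The interval `[0, S)`, `S ∈ (0, ∞]`, is encoded via `S : EReal`, `0 < S`. -/
theorem time_change_global_when_strong_damping
    (α τstar : ℝ) (hα : 0 < α) (hτstar : 0 < τstar)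
    (g : ℝ → ℝ) (hgcont : ContinuousOn g (Set.Ico 0 τstar))
    (hgpos : ∀ μ ∈ Set.Ico (0:ℝ) τstar, 0 < g μ)
    (hgint : MeasureTheory.IntegrableOn g (Set.Ioo 0 τstar))
    (T : ℝ) (hT : T = ∫ μ in Set.Ioo (0:ℝ) τstar, g μ)
    (hαT : 1 / T ≤ α)
    (S : EReal) (hS : 0 < S)
    (τ : ℝ → ℝ)
    (hmap : ∀ t : ℝ, 0 ≤ t → (t : EReal) < S → τ t ∈ Set.Ico 0 τstar)
    (hτ0 : τ 0 = 0)
    (hdiff : ∀ t : ℝ, 0 ≤ t → (t : EReal) < S → DifferentiableAt ℝ τ t)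
    (hode : ∀ t : ℝ, 0 ≤ t → (t : EReal) < S →
      deriv τ t = Real.exp (-α * t) / g (τ t)) :
    (∀ t : ℝ, 0 ≤ t → (t : EReal) < S →
        (∫ μ in (0:ℝ)..(τ t), g μ) < 1 / α ∧ 1 / α ≤ T) ∧
    (S = ⊤ → α = 1 / T → Filter.Tendsto τ Filter.atTop (nhds τstar)) ∧
    (S = ⊤ → 1 / T < α → ∃ τ₁ ∈ Set.Ioo (0:ℝ) τstar,
      (∫ μ in (0:ℝ)..τ₁, g μ) = 1 / α ∧
      (∀ τ₂ ∈ Set.Ioo (0:ℝ) τstar, (∫ μ in (0:ℝ)..τ₂, g μ) = 1 / α → τ₂ = τ₁) ∧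
      Filter.Tendsto τ Filter.atTop (nhds τ₁)) :=
  time_change_global_when_strong_damping_general α τstar hα hτstar g hgcont hgpos hgint T hT hαT S τ
    hmap hτ0 hdiff hode
end

section
/- Let α > 0, τ* ∈ (0,∞), let g : [0,τ*) → ℝ be continuous with g(μ) > 0 for all μ, and suppose T := ∫₀^{τ*} g(μ) dμ is finite with 0 < α < 1/T. Let S ∈ (0,∞], and let τ : [0,S) → [0,τ*) be differentiable with τ(0) = 0, τ'(t) = e^{−αt}/g(τ(t)) for all t ∈ [0,S), and suppose τ(t) → τ* as t → S⁻. Then S is finite and S = −(1/α)·ln(1 − α·T); moreover S > T. -/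
/-!
Separating variables in `τ' = e^{-αt} / g(τ)` gives `G(τ t) = (1 - e^{-αt}) / α` on `[0, S)`,
where `G x = ∫₀^x g`. As `t → S⁻` the left side tends to `G τ* = T`. If `S = ∞` the right side
tends to `1 / α`, which `αT < 1` forbids; so `S` is finite, `e^{-αS} = 1 - αT`, and `S > T`
because `e^{-αS} > 1 - αS`.
-/

open Filter Set Topology Real MeasureTheory intervalIntegral
open scoped Interval

theorem EReal.tendsto_coe_atTop_nhdsLT_top :
    Tendsto ((↑) : ℝ → EReal) atTop (𝓝[<] ⊤) := by
  rw [Iio_top, EReal.nhdsWithin_top]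
  exact tendsto_map

theorem EReal.tendsto_coe_nhdsLT_coe (s : ℝ) :
    Tendsto ((↑) : ℝ → EReal) (𝓝[<] s) (𝓝[<] (s : EReal)) :=
  continuous_coe_real_ereal.continuousWithinAt.tendsto_nhdsWithin
    fun _ ht => EReal.coe_lt_coe_iff.2 ht

theorem integral_exp_neg_mul {α : ℝ} (hα : α ≠ 0) (t : ℝ) :
    ∫ s in 0..t, exp (-α * s) = (1 - exp (-α * t)) / α := by
  rw [integral_comp_mul_left (fun s => exp s) (neg_ne_zero.2 hα), integral_exp, mul_zero,
    exp_zero, smul_eq_mul]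
  field_simp
  ring

theorem tendsto_one_sub_exp_neg_mul_div_atTop {α : ℝ} (hα : 0 < α) :
    Tendsto (fun t => (1 - exp (-α * t)) / α) atTop (𝓝 (1 / α)) := by
  have hexp : Tendsto (fun t => exp (-α * t)) atTop (𝓝 0) := by
    simpa [Function.comp_def, neg_mul] using
      tendsto_exp_neg_atTop_nhds_zero.comp (tendsto_id.const_mul_atTop hα)
  simpa only [sub_zero] using (hexp.const_sub 1).div_const α

theorem integral_separation_of_variables {g h τ : ℝ → ℝ} {a b : ℝ}
    (hτ : ∀ s ∈ [[a, b]], HasDerivAt τ (h s / g (τ s)) s)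
    (hh : ContinuousOn h [[a, b]]) (hg : ContinuousOn g (τ '' [[a, b]]))
    (hg0 : ∀ s ∈ [[a, b]], g (τ s) ≠ 0) :
    ∫ x in τ a..τ b, g x = ∫ s in a..b, h s := by
  have hτc : ContinuousOn τ [[a, b]] := fun s hs => (hτ s hs).continuousAt.continuousWithinAt
  have hτ' : ContinuousOn (fun s => h s / g (τ s)) [[a, b]] :=
    hh.div (hg.comp hτc (mapsTo_image τ _)) hg0
  rw [← integral_comp_mul_deriv' hτ hτ' hg]
  exact integral_congr fun s hs => mul_div_cancel₀ (h s) (hg0 s hs)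

theorem tendsto_primitive_comp_of_tendsto {g τ : ℝ → ℝ} {a b : ℝ} {l : Filter ℝ} (hab : a ≤ b)
    (hg : IntegrableOn g (Ioo a b)) (hτ : Tendsto τ l (𝓝 b)) (hmem : ∀ᶠ t in l, τ t ∈ Icc a b) :
    Tendsto (fun t => ∫ x in a..τ t, g x) l (𝓝 (∫ x in Ioo a b, g x)) := by
  have hgI : IntervalIntegrable g volume a b :=
    (intervalIntegrable_iff_integrableOn_Ioo_of_le hab).2 hg
  have hcont : ContinuousWithinAt (fun y => ∫ x in a..y, g x) (Icc a b) b :=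
    continuousWithinAt_primitive (measure_singleton b) (by rwa [min_self, max_eq_right hab])
  rw [← integral_Ioc_eq_integral_Ioo, ← integral_of_le hab]
  exact hcont.tendsto.comp (tendsto_nhdsWithin_iff.2 ⟨hτ, hmem⟩)

theorem integral_comp_eq_one_sub_exp_div {α t : ℝ} {g τ : ℝ → ℝ} {U : Set ℝ} (hα : α ≠ 0)
    (hg : ContinuousOn g U) (hg0 : ∀ x ∈ U, g x ≠ 0) (hτ0 : τ 0 = 0) (ht : 0 ≤ t)
    (hmap : MapsTo τ (Icc 0 t) U)
    (hτ : ∀ s ∈ Icc 0 t, HasDerivAt τ (exp (-α * s) / g (τ s)) s) :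
    ∫ x in 0..τ t, g x = (1 - exp (-α * t)) / α := by
  have hI : [[0, t]] = Icc 0 t := uIcc_of_le ht
  have h := integral_separation_of_variables (h := fun s => exp (-α * s)) (hI ▸ hτ)
    (by fun_prop) (hg.mono (hI ▸ hmap.image_subset)) (hI ▸ fun s hs => hg0 _ (hmap hs))
  rwa [hτ0, integral_exp_neg_mul hα] at h

theorem eq_neg_log_and_lt_of_eq_one_sub_exp_div {α s T : ℝ} (hα : 0 < α) (hs : 0 < s)
    (hT : T = (1 - exp (-α * s)) / α) :
    s = -(1 / α) * log (1 - α * T) ∧ T < s := by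
  have hexp : exp (-α * s) = 1 - α * T := by
    rw [hT]; field_simp; ring
  constructor
  · rw [← hexp, log_exp]; field_simp
  · have := add_one_lt_exp (mul_ne_zero (neg_ne_zero.2 hα.ne') hs.ne')
    nlinarith

theorem time_change_blowup_time_weak_damping_general
    (α τstar : ℝ) (hα : 0 < α)
    (g : ℝ → ℝ) (hgcont : ContinuousOn g (Set.Ico 0 τstar))
    (hgpos : ∀ μ ∈ Set.Ico (0:ℝ) τstar, 0 < g μ)
    (hgint : MeasureTheory.IntegrableOn g (Set.Ioo 0 τstar))
    (T : ℝ) (hT : T = ∫ μ in Set.Ioo (0:ℝ) τstar, g μ)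
    (hαT : α < 1 / T)
    (S : EReal) (hS : 0 < S)
    (τ : ℝ → ℝ)
    (hmap : ∀ t : ℝ, 0 ≤ t → (t : EReal) < S → τ t ∈ Set.Ico 0 τstar)
    (hτ0 : τ 0 = 0)
    (hdiff : ∀ t : ℝ, 0 ≤ t → (t : EReal) < S → DifferentiableAt ℝ τ t)
    (hode : ∀ t : ℝ, 0 ≤ t → (t : EReal) < S →
      deriv τ t = Real.exp (-α * t) / g (τ t))
    (hlim : Filter.Tendsto τ
      (Filter.comap (fun t : ℝ => (t : EReal)) (nhdsWithin S (Set.Iio S)))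
      (nhds τstar)) :
    S = ((-(1 / α) * Real.log (1 - α * T) : ℝ) : EReal) ∧ (T : EReal) < S := by
  set L := comap (fun t : ℝ => (t : EReal)) (𝓝[<] S)
  have hτstar : 0 ≤ τstar := (hτ0 ▸ hmap 0 le_rfl hS).2.le
  have hev : ∀ᶠ t : ℝ in L, 0 ≤ t ∧ (t : EReal) < S :=
    mem_of_superset (preimage_mem_comap (Ioo_mem_nhdsLT hS)) fun t ht =>
      ⟨EReal.coe_nonneg.1 ht.1.le, ht.2⟩
  have hlimT : Tendsto (fun t => ∫ x in 0..τ t, g x) L (𝓝 T) := hT ▸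
    tendsto_primitive_comp_of_tendsto hτstar hgint hlim
      (hev.mono fun t ht => Ico_subset_Icc_self (hmap t ht.1 ht.2))
  have hid : (fun t => ∫ x in 0..τ t, g x) =ᶠ[L] fun t => (1 - exp (-α * t)) / α := by
    filter_upwards [hev] with t ⟨ht0, htS⟩
    have hlt : ∀ s ∈ Icc 0 t, (s : EReal) < S := fun s hs =>
      (EReal.coe_le_coe_iff.2 hs.2).trans_lt htS
    refine integral_comp_eq_one_sub_exp_div hα.ne' hgcont (fun μ hμ => (hgpos μ hμ).ne') hτ0 ht0
      (fun s hs => hmap s hs.1 (hlt s hs)) fun s hs => ?_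
    exact hode s hs.1 (hlt s hs) ▸ (hdiff s hs.1 (hlt s hs)).hasDerivAt
  have hT_eq : ∀ (F : Filter ℝ) [F.NeBot] (c : ℝ), F ≤ L →
      Tendsto (fun t => (1 - exp (-α * t)) / α) F (𝓝 c) → T = c := fun F _ c hF hc =>
    tendsto_nhds_unique (hlimT.mono_left hF) (hc.congr' (hid.filter_mono hF).symm)
  induction S using EReal.rec with
  | bot => exact absurd hS not_lt_bot
  | top =>
    have h := hT_eq atTop (1 / α) EReal.tendsto_coe_atTop_nhdsLT_top.le_comap
      (tendsto_one_sub_exp_neg_mul_div_atTop hα)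
    rw [h, one_div_one_div] at hαT
    exact absurd hαT (lt_irrefl α)
  | coe s =>
    have hs : 0 < s := EReal.coe_pos.1 hS
    obtain ⟨hsT, hTs⟩ := eq_neg_log_and_lt_of_eq_one_sub_exp_div hα hs
      (hT_eq (𝓝[<] s) _ (EReal.tendsto_coe_nhdsLT_coe s).le_comap
        (((by fun_prop : Continuous fun t => (1 - exp (-α * t)) / α).tendsto s).mono_left
          nhdsWithin_le_nhds))
    exact ⟨congrArg _ hsT, EReal.coe_lt_coe_iff.2 hTs⟩

/-- Case 1 of Theorem 2.2 of Chen–Sarria, at the level of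
the time-change ODE. If `T = ∫₀^{τ*} g` is finite, `0 < α < 1/T`, and the
solution `τ` of `τ'(t) = e^{−αt}/g(τ(t))`, `τ(0) = 0`, on `[0, S)` satisfies
`τ(t) → τ*` as `t → S⁻`, then `S` is finite with
`S = −(1/α) ln(1 − αT) > T`.  Here `S ∈ (0, ∞]` is an `EReal`, and the
left-limit filter `t → S⁻` is the comap under `ℝ → EReal` of `𝓝[<] S`. -/
theorem time_change_blowup_time_weak_damping
    (α τstar : ℝ) (hα : 0 < α) (hτstar : 0 < τstar)
    (g : ℝ → ℝ) (hgcont : ContinuousOn g (Set.Ico 0 τstar))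
    (hgpos : ∀ μ ∈ Set.Ico (0:ℝ) τstar, 0 < g μ)
    (hgint : MeasureTheory.IntegrableOn g (Set.Ioo 0 τstar))
    (T : ℝ) (hT : T = ∫ μ in Set.Ioo (0:ℝ) τstar, g μ)
    (hαT : α < 1 / T)
    (S : EReal) (hS : 0 < S)
    (τ : ℝ → ℝ)
    (hmap : ∀ t : ℝ, 0 ≤ t → (t : EReal) < S → τ t ∈ Set.Ico 0 τstar)
    (hτ0 : τ 0 = 0)
    (hdiff : ∀ t : ℝ, 0 ≤ t → (t : EReal) < S → DifferentiableAt ℝ τ t)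
    (hode : ∀ t : ℝ, 0 ≤ t → (t : EReal) < S →
      deriv τ t = Real.exp (-α * t) / g (τ t))
    (hlim : Filter.Tendsto τ
      (Filter.comap (fun t : ℝ => (t : EReal)) (nhdsWithin S (Set.Iio S)))
      (nhds τstar)) :
    S = ((-(1 / α) * Real.log (1 - α * T) : ℝ) : EReal) ∧ (T : EReal) < S :=
  time_change_blowup_time_weak_damping_general α τstar hα g hgcont hgpos hgint T hT hαT S hS τ hmap
    hτ0 hdiff hode hlim
end

section
/- Let α ∈ ℝ, S ∈ (0,∞], I : [0,S) → ℝ a function, and let μ₁ : [0,S) → ℝ be twice differentiable with μ₁(t) > 0 for all t. Define μ₂(t) := μ₁(t) − 1/μ₁(t). If μ₁''(t) + α·μ₁'(t) − I(t)·μ₁(t) = 0 and μ₂''(t) + α·μ₂'(t) − I(t)·μ₂(t) = 1 for all t ∈ [0,S), then N := μ₁'/μ₁ satisfies N'(t) + α·N(t) = μ₁(t)/2 for all t ∈ [0,S). -/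
/-!
With `a = μ₁`, `b = μ₁'`, `c = μ₁''`, the second equation reads
`c (1 + 1/a²) − 2b²/a³ + α b (1 + 1/a²) − I (a − 1/a) = 1`. By the first equation
`c + α b = I a`, so it collapses to `2I/a − 2b²/a³ = 1`; substituting `I = (c + α b)/a`
once more gives `2(ca + αab − b²) = a³`, which is `N' + αN = a/2`.
The only analytic subtlety is that `μ₂'` must be known near `t`, not just at `t`: this works
because `x ↦ x − 1/x` is invertible on `(0, ∞)`, so `μ₁` and `μ₂` are differentiable at the
same points, and `deriv` gives matching junk values elsewhere.
-/

open Filter Topology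

lemma sub_one_div_add_sqrt_div_two {x : ℝ} (hx : 0 < x) :
    (x - 1 / x + √((x - 1 / x) ^ 2 + 4)) / 2 = x := by
  have hsq : (x - 1 / x) ^ 2 + 4 = (x + 1 / x) ^ 2 := by
    field_simp; ring
  rw [hsq, Real.sqrt_sq (by positivity)]
  ring

lemma differentiableAt_of_differentiableAt_sub_one_div {f : ℝ → ℝ} {s : ℝ}
    (hf : ∀ᶠ x in 𝓝 s, 0 < f x) (hd : DifferentiableAt ℝ (fun x => f x - 1 / f x) s) :
    DifferentiableAt ℝ f s := by
  have hsqrt : DifferentiableAt ℝ (fun x => √((f x - 1 / f x) ^ 2 + 4)) s :=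
    ((hd.pow 2).add_const 4).sqrt (by simp only [Pi.pow_apply]; positivity)
  refine ((hd.add hsqrt).div_const 2).congr_of_eventuallyEq ?_
  filter_upwards [hf] with x hx
  exact (sub_one_div_add_sqrt_div_two hx).symm

lemma HasDerivAt.sub_one_div {f : ℝ → ℝ} {f' x : ℝ} (hf : HasDerivAt f f' x) (hx : f x ≠ 0) :
    HasDerivAt (fun y => f y - 1 / f y) (f' * (1 + 1 / f x ^ 2)) x := by
  refine (hf.sub ((hasDerivAt_const x (1 : ℝ)).div hf hx)).congr_deriv ?_
  field_simp
  ring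

lemma deriv_sub_one_div_of_eventually_pos {f : ℝ → ℝ} {s : ℝ} (hf : ∀ᶠ x in 𝓝 s, 0 < f x) :
    deriv (fun x => f x - 1 / f x) s = deriv f s * (1 + 1 / f s ^ 2) := by
  by_cases hd : DifferentiableAt ℝ f s
  · exact (hd.hasDerivAt.sub_one_div hf.self_of_nhds.ne').deriv
  · rw [deriv_zero_of_not_differentiableAt hd, zero_mul, deriv_zero_of_not_differentiableAt
      fun h => hd (differentiableAt_of_differentiableAt_sub_one_div hf h)]

lemma deriv_deriv_sub_one_div {f : ℝ → ℝ} {t : ℝ} (hpos : 0 < f t)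
    (hf : DifferentiableAt ℝ f t) (hf' : DifferentiableAt ℝ (deriv f) t) :
    deriv (deriv fun x => f x - 1 / f x) t =
      deriv (deriv f) t * (1 + 1 / f t ^ 2) - 2 * deriv f t ^ 2 / f t ^ 3 := by
  have hev : ∀ᶠ x in 𝓝 t, 0 < f x := hf.continuousAt.eventually (eventually_gt_nhds hpos)
  have hderiv : deriv (fun x => f x - 1 / f x) =ᶠ[𝓝 t] fun x => deriv f x * (1 + 1 / f x ^ 2) :=
    hev.eventually_nhds.mono fun _ => deriv_sub_one_div_of_eventually_pos
  have hsq : HasDerivAt (fun x => 1 + 1 / f x ^ 2) (-(2 * f t * deriv f t) / (f t ^ 2) ^ 2) t :=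
    by simpa using ((hasDerivAt_const t (1 : ℝ)).div (hf.hasDerivAt.pow 2)
      (pow_ne_zero 2 hpos.ne')).const_add 1
  have hprod : HasDerivAt (fun x => deriv f x * (1 + 1 / f x ^ 2)) _ t :=
    hf'.hasDerivAt.mul hsq
  rw [hderiv.deriv_eq, hprod.deriv]
  field_simp
  ring

lemma logDeriv_equation_of_odes {a b c α I : ℝ} (ha : a ≠ 0)
    (hom : c + α * b - I * a = 0)
    (hinh : c * (1 + 1 / a ^ 2) - 2 * b ^ 2 / a ^ 3 + α * (b * (1 + 1 / a ^ 2))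
      - I * (a - 1 / a) = 1) :
    (c * a - b * b) / a ^ 2 + α * (b / a) = a / 2 := by
  have hI : I = (c + α * b) / a := by field_simp; linarith
  subst hI
  field_simp at hinh ⊢
  linear_combination hinh

theorem eliminate_nonlocal_term_logarithmic_derivative_general
    (α : ℝ) (S : EReal) (I μ₁ μ₂ : ℝ → ℝ)
    (hpos : ∀ t : ℝ, 0 ≤ t → (t : EReal) < S → 0 < μ₁ t)
    (hdiff : ∀ t : ℝ, 0 ≤ t → (t : EReal) < S →
      DifferentiableAt ℝ μ₁ t ∧ DifferentiableAt ℝ (deriv μ₁) t)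
    (hμ₂ : ∀ t : ℝ, μ₂ t = μ₁ t - 1 / μ₁ t)
    (hode1 : ∀ t : ℝ, 0 ≤ t → (t : EReal) < S →
      deriv (deriv μ₁) t + α * deriv μ₁ t - I t * μ₁ t = 0)
    (hode2 : ∀ t : ℝ, 0 ≤ t → (t : EReal) < S →
      deriv (deriv μ₂) t + α * deriv μ₂ t - I t * μ₂ t = 1) :
    ∀ t : ℝ, 0 ≤ t → (t : EReal) < S →
      deriv (fun s => deriv μ₁ s / μ₁ s) t + α * (deriv μ₁ t / μ₁ t) = μ₁ t / 2 := by
  obtain rfl : μ₂ = fun s => μ₁ s - 1 / μ₁ s := funext hμ₂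
  intro t ht htS
  obtain ⟨hd, hd'⟩ := hdiff t ht htS
  have ha := hpos t ht htS
  have hinh := hode2 t ht htS
  rw [deriv_deriv_sub_one_div ha hd hd',
    deriv_sub_one_div_of_eventually_pos (hd.continuousAt.eventually (eventually_gt_nhds ha))]
    at hinh
  have hN : HasDerivAt (fun s => deriv μ₁ s / μ₁ s) _ t :=
    hd'.hasDerivAt.div hd.hasDerivAt ha.ne'
  rw [hN.deriv]
  exact logDeriv_equation_of_odes ha.ne' (hode1 t ht htS) hinh

/-- elimination step in Theorem 2.3, part 2, of
Chen–Sarria. If `μ₁` solves the homogeneous equation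
`μ₁'' + α μ₁' − I(t) μ₁ = 0` and `μ₂ = μ₁ − 1/μ₁` solves the inhomogeneous
equation `μ₂'' + α μ₂' − I(t) μ₂ = 1`, then `N = μ₁'/μ₁` satisfies
`N' + αN = μ₁/2`.  The interval `[0, S)`, `S ∈ (0, ∞]`, is encoded via
`S : EReal`, `0 < S`. -/
theorem eliminate_nonlocal_term_logarithmic_derivative
    (α : ℝ) (S : EReal) (hS : 0 < S) (I μ₁ μ₂ : ℝ → ℝ)
    (hpos : ∀ t : ℝ, 0 ≤ t → (t : EReal) < S → 0 < μ₁ t)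
    (hdiff : ∀ t : ℝ, 0 ≤ t → (t : EReal) < S →
      DifferentiableAt ℝ μ₁ t ∧ DifferentiableAt ℝ (deriv μ₁) t)
    (hμ₂ : ∀ t : ℝ, μ₂ t = μ₁ t - 1 / μ₁ t)
    (hode1 : ∀ t : ℝ, 0 ≤ t → (t : EReal) < S →
      deriv (deriv μ₁) t + α * deriv μ₁ t - I t * μ₁ t = 0)
    (hode2 : ∀ t : ℝ, 0 ≤ t → (t : EReal) < S →
      deriv (deriv μ₂) t + α * deriv μ₂ t - I t * μ₂ t = 1) :
    ∀ t : ℝ, 0 ≤ t → (t : EReal) < S →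
      deriv (fun s => deriv μ₁ s / μ₁ s) t + α * (deriv μ₁ t / μ₁ t) = μ₁ t / 2 :=
  eliminate_nonlocal_term_logarithmic_derivative_general α S I μ₁ μ₂ hpos hdiff hμ₂ hode1 hode2
end

section
/- Let α ≥ 0, S ∈ (0,∞], and let N : [0,S) → ℝ be twice differentiable with N(0) = 1, N'(0) = 1/2 − α, and (d/dt)(N'(t) − N(t)²/2 + α·N(t)) = α·N(t)² for all t ∈ [0,S). Then the function z(t) := e^{αt}·N(t) satisfies z(0) = 1 and z'(t) ≥ (1/2)·e^{−αt}·z(t)² for all t ∈ [0,S). -/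
/-!
The quantity `F = N' − N²/2 + αN` vanishes at `0` by the initial conditions and has derivative
`αN² ≥ 0`, so `F ≥ 0`, i.e. `N' + αN ≥ N²/2`. Multiplying by `e^{αt}` turns the left side into
`(e^{αt} N)'` and the right side into `(1/2) e^{−αt} (e^{αt} N)²`.
-/

open Real Set

theorem le_of_forall_deriv_nonneg_Icc {F : ℝ → ℝ} {a b : ℝ} (hab : a ≤ b)
    (hF : ∀ s ∈ Icc a b, DifferentiableAt ℝ F s) (hF' : ∀ s ∈ Ioo a b, 0 ≤ deriv F s) :
    F a ≤ F b := by
  refine monotoneOn_of_deriv_nonneg (convex_Icc a b)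
    (fun s hs => (hF s hs).continuousAt.continuousWithinAt) ?_ ?_
    (left_mem_Icc.2 hab) (right_mem_Icc.2 hab) hab
  · rw [interior_Icc]
    exact fun s hs => (hF s (Ioo_subset_Icc_self hs)).differentiableWithinAt
  · rwa [interior_Icc]

theorem half_sq_le_deriv_add_mul {α t : ℝ} {N : ℝ → ℝ} (hα : 0 ≤ α) (ht : 0 ≤ t)
    (hdiff : ∀ s ∈ Icc 0 t, DifferentiableAt ℝ N s ∧ DifferentiableAt ℝ (deriv N) s)
    (hN0 : N 0 = 1) (hN'0 : deriv N 0 = 1 / 2 - α)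
    (hode : ∀ s ∈ Icc 0 t,
      deriv (fun s => deriv N s - N s ^ 2 / 2 + α * N s) s = α * N s ^ 2) :
    N t ^ 2 / 2 ≤ deriv N t + α * N t := by
  have hF := le_of_forall_deriv_nonneg_Icc
    (F := fun s => deriv N s - N s ^ 2 / 2 + α * N s) ht
    (fun s hs => ((hdiff s hs).2.sub (((hdiff s hs).1.pow 2).div_const 2)).add
      ((hdiff s hs).1.const_mul α))
    (fun s hs => by rw [hode s (Ioo_subset_Icc_self hs)]; positivity)
  simp only [hN0, hN'0] at hF
  linarith

theorem hasDerivAt_exp_mul_mul {f : ℝ → ℝ} {f' α t : ℝ} (hf : HasDerivAt f f' t) :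
    HasDerivAt (fun s => exp (α * s) * f s) (exp (α * t) * (f' + α * f t)) t :=
  (((hasDerivAt_id' t).const_mul α).exp.mul hf).congr_deriv (by ring)

theorem half_exp_neg_mul_sq_le {α t n n' : ℝ} (h : n ^ 2 / 2 ≤ n' + α * n) :
    1 / 2 * exp (-α * t) * (exp (α * t) * n) ^ 2 ≤ exp (α * t) * (n' + α * n) := by
  calc 1 / 2 * exp (-α * t) * (exp (α * t) * n) ^ 2 = exp (α * t) * (n ^ 2 / 2) := by
        rw [neg_mul, exp_neg]
        field_simp
    _ ≤ exp (α * t) * (n' + α * n) := by gcongr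

theorem riccati_inequality_from_integrated_identity_general
    (α : ℝ) (hα : 0 ≤ α) (S : EReal) (N : ℝ → ℝ)
    (hdiff : ∀ t : ℝ, 0 ≤ t → (t : EReal) < S →
      DifferentiableAt ℝ N t ∧ DifferentiableAt ℝ (deriv N) t)
    (hN0 : N 0 = 1) (hN'0 : deriv N 0 = 1 / 2 - α)
    (hode : ∀ t : ℝ, 0 ≤ t → (t : EReal) < S →
      deriv (fun s => deriv N s - N s ^ 2 / 2 + α * N s) t = α * N t ^ 2) :
    Real.exp (α * 0) * N 0 = 1 ∧
      ∀ t : ℝ, 0 ≤ t → (t : EReal) < S →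
        (1 / 2) * Real.exp (-α * t) * (Real.exp (α * t) * N t) ^ 2 ≤
          deriv (fun s => Real.exp (α * s) * N s) t := by
  refine ⟨by simp [hN0], fun t ht htS => ?_⟩
  have hIcc : ∀ s ∈ Icc 0 t, (s : EReal) < S :=
    fun s hs => (EReal.coe_le_coe_iff.2 hs.2).trans_lt htS
  have hsq := half_sq_le_deriv_add_mul hα ht (fun s hs => hdiff s hs.1 (hIcc s hs)) hN0 hN'0
    (fun s hs => hode s hs.1 (hIcc s hs))
  rw [(hasDerivAt_exp_mul_mul (hdiff t ht htS).1.hasDerivAt).deriv]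
  exact half_exp_neg_mul_sq_le hsq

/-- Gronwall-type step (4.20) in Theorem 2.3, part 2, of
Chen–Sarria. If `N(0) = 1`, `N'(0) = 1/2 − α` and
`(N' − N²/2 + αN)' = αN²` on `[0, S)`, then `z(t) = e^{αt} N(t)` satisfies
`z(0) = 1` and the Riccati differential inequality
`z'(t) ≥ (1/2) e^{−αt} z(t)²`.  The interval `[0, S)`, `S ∈ (0, ∞]`, is
encoded via `S : EReal`, `0 < S`. -/
theorem riccati_inequality_from_integrated_identity
    (α : ℝ) (hα : 0 ≤ α) (S : EReal) (hS : 0 < S) (N : ℝ → ℝ)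
    (hdiff : ∀ t : ℝ, 0 ≤ t → (t : EReal) < S →
      DifferentiableAt ℝ N t ∧ DifferentiableAt ℝ (deriv N) t)
    (hN0 : N 0 = 1) (hN'0 : deriv N 0 = 1 / 2 - α)
    (hode : ∀ t : ℝ, 0 ≤ t → (t : EReal) < S →
      deriv (fun s => deriv N s - N s ^ 2 / 2 + α * N s) t = α * N t ^ 2) :
    Real.exp (α * 0) * N 0 = 1 ∧
      ∀ t : ℝ, 0 ≤ t → (t : EReal) < S →
        (1 / 2) * Real.exp (-α * t) * (Real.exp (α * t) * N t) ^ 2 ≤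
          deriv (fun s => Real.exp (α * s) * N s) t :=
  riccati_inequality_from_integrated_identity_general α hα S N hdiff hN0 hN'0 hode
end

section
/- Let 0 < α < 1/2 and set T_α := −(1/α)·ln(1 − 2α). Let S ∈ (0,∞] and let z : [0,S) → ℝ be differentiable with z(0) = 1 and z'(t) ≥ (1/2)·e^{−αt}·z(t)² for all t ∈ [0,S). Then for every t ∈ [0,S) with t < T_α: z(t) ≥ 2α/(e^{−αt} − (1 − 2α)). -/
/-!
If `z' ≥ k z²` with `z > 0` and `K' = k`, then `(1/z + K)' = -z'/z² + k ≤ 0`, so `1/z + K` is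
nonincreasing. With `k(t) = e^{-αt}/2`, `K(t) = -e^{-αt}/(2α)` and `z(0) = 1` this gives
`1/z(t) ≤ (e^{-αt} - (1 - 2α))/(2α)`. Since `z(t) > 0`, the right-hand side is positive, and
inverting gives the claimed lower bound.
-/

open Set Real

section RiccatiComparison

variable {s : Set ℝ} {z z' k K : ℝ → ℝ}

lemma antitoneOn_inv_add_of_mul_sq_le_deriv (hs : Convex ℝ s)
    (hz : ∀ x ∈ s, HasDerivAt z (z' x) x) (hK : ∀ x ∈ s, HasDerivAt K (k x) x)
    (hpos : ∀ x ∈ s, 0 < z x) (hle : ∀ x ∈ s, k x * z x ^ 2 ≤ z' x) :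
    AntitoneOn (fun x ↦ (z x)⁻¹ + K x) s := by
  have hderiv : ∀ x ∈ s, HasDerivAt (fun x ↦ (z x)⁻¹ + K x) (-z' x / z x ^ 2 + k x) x :=
    fun x hx ↦ ((hz x hx).inv (hpos x hx).ne').add (hK x hx)
  refine antitoneOn_of_deriv_nonpos hs
    (fun x hx ↦ (hderiv x hx).continuousAt.continuousWithinAt)
    (fun x hx ↦ (hderiv x (interior_subset hx)).differentiableAt.differentiableWithinAt)
    fun x hx ↦ ?_
  have hx := interior_subset hx
  rw [(hderiv x hx).deriv, neg_div, neg_add_nonpos_iff, le_div_iff₀ (pow_pos (hpos x hx) 2)]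
  exact hle x hx

lemma riccati_comparison {a b : ℝ} (hab : a ≤ b)
    (hz : ∀ x ∈ Icc a b, HasDerivAt z (z' x) x) (hK : ∀ x ∈ Icc a b, HasDerivAt K (k x) x)
    (hk : ∀ x ∈ Icc a b, 0 ≤ k x) (hle : ∀ x ∈ Icc a b, k x * z x ^ 2 ≤ z' x)
    (ha : 0 < z a) :
    0 < z b ∧ (z b)⁻¹ + K b ≤ (z a)⁻¹ + K a := by
  have hmono : MonotoneOn z (Icc a b) :=
    monotoneOn_of_deriv_nonneg (convex_Icc a b)
      (fun x hx ↦ (hz x hx).continuousAt.continuousWithinAt)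
      (fun x hx ↦ (hz x (interior_subset hx)).differentiableAt.differentiableWithinAt)
      fun x hx ↦ by
        have hx := interior_subset hx
        rw [(hz x hx).deriv]
        exact (mul_nonneg (hk x hx) (sq_nonneg _)).trans (hle x hx)
  have hpos : ∀ x ∈ Icc a b, 0 < z x :=
    fun x hx ↦ ha.trans_le (hmono (left_mem_Icc.2 hab) hx hx.1)
  exact ⟨hpos b (right_mem_Icc.2 hab),
    antitoneOn_inv_add_of_mul_sq_le_deriv (convex_Icc a b) hz hK hpos hle
      (left_mem_Icc.2 hab) (right_mem_Icc.2 hab) hab⟩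

end RiccatiComparison

lemma hasDerivAt_neg_exp_neg_mul_div {α : ℝ} (hα : α ≠ 0) (x : ℝ) :
    HasDerivAt (fun x ↦ -exp (-α * x) / (2 * α)) (1 / 2 * exp (-α * x)) x :=
  (((hasDerivAt_id' x).const_mul (-α)).exp.neg.div_const (2 * α)).congr_deriv (by field_simp)

theorem riccati_comparison_lower_bound_general
    (α : ℝ) (hα : 0 < α)
    (S : EReal) (z : ℝ → ℝ)
    (hz0 : z 0 = 1)
    (hdiff : ∀ t : ℝ, 0 ≤ t → (t : EReal) < S → DifferentiableAt ℝ z t)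
    (hineq : ∀ t : ℝ, 0 ≤ t → (t : EReal) < S →
      (1 / 2) * Real.exp (-α * t) * z t ^ 2 ≤ deriv z t) :
    ∀ t : ℝ, 0 ≤ t → (t : EReal) < S → t < -(1 / α) * Real.log (1 - 2 * α) →
      2 * α / (Real.exp (-α * t) - (1 - 2 * α)) ≤ z t := by
  intro t ht0 htS _
  have hlt : ∀ x ∈ Icc 0 t, (x : EReal) < S :=
    fun x hx ↦ (EReal.coe_le_coe_iff.2 hx.2).trans_lt htS
  obtain ⟨hzt, hcmp⟩ := riccati_comparison ht0
    (fun x hx ↦ (hdiff x hx.1 (hlt x hx)).hasDerivAt)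
    (fun x _ ↦ hasDerivAt_neg_exp_neg_mul_div hα.ne' x)
    (fun x _ ↦ by positivity) (fun x hx ↦ hineq x hx.1 (hlt x hx)) (by simp [hz0])
  have hinv : (z t)⁻¹ ≤ (exp (-α * t) - (1 - 2 * α)) / (2 * α) := by
    simp only [hz0, mul_zero, exp_zero, inv_one, neg_div] at hcmp
    rw [sub_div, sub_div, div_self (by positivity)]
    linarith
  have hD : 0 < exp (-α * t) - (1 - 2 * α) :=
    (div_pos_iff_of_pos_right (by positivity)).1 ((inv_pos.2 hzt).trans_le hinv)
  rwa [inv_le_comm₀ hzt (div_pos hD (by positivity)), inv_div] at hinv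

/-- comparison step in Theorem 2.3, part 2, of
Chen–Sarria. A solution of the Riccati differential inequality
`z' ≥ (1/2) e^{−αt} z²`, `z(0) = 1`, with `0 < α < 1/2`, satisfies
`z(t) ≥ 2α/(e^{−αt} − (1 − 2α))` for `t < T_α = −(1/α) ln(1 − 2α)`.
The interval `[0, S)`, `S ∈ (0, ∞]`, is encoded via `S : EReal`, `0 < S`. -/
theorem riccati_comparison_lower_bound
    (α : ℝ) (hα : 0 < α) (hα' : α < 1 / 2)
    (S : EReal) (hS : 0 < S) (z : ℝ → ℝ)
    (hz0 : z 0 = 1)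
    (hdiff : ∀ t : ℝ, 0 ≤ t → (t : EReal) < S → DifferentiableAt ℝ z t)
    (hineq : ∀ t : ℝ, 0 ≤ t → (t : EReal) < S →
      (1 / 2) * Real.exp (-α * t) * z t ^ 2 ≤ deriv z t) :
    ∀ t : ℝ, 0 ≤ t → (t : EReal) < S → t < -(1 / α) * Real.log (1 - 2 * α) →
      2 * α / (Real.exp (-α * t) - (1 - 2 * α)) ≤ z t :=
  riccati_comparison_lower_bound_general α hα S z hz0 hdiff hineq
end

section
/- Let 0 < α < 1/2 and set T_α := −(1/α)·ln(1 − 2α). Let μ₁ : [0,T_α) → ℝ be differentiable with μ₁(t) > 0 for all t, μ₁(0) = 1, and μ₁'(t) ≥ (2α·e^{−αt}/(e^{−αt} − (1 − 2α)))·μ₁(t) for all t ∈ [0,T_α). Then μ₁(t) ≥ 4α²/(e^{−αt} − (1 − 2α))² for all t ∈ [0,T_α), and consequently μ₁(t) → +∞ as t → T_α⁻. -/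
/-!
The right-hand side `φ(t) = 4α² / (e^{-αt} - (1 - 2α))²` solves the linear equation
`φ' = k φ` with the coefficient `k` of the differential inequality and `φ(0) = 1`. Hence
`(μ₁ / φ)' = (μ₁' - k μ₁) / φ ≥ 0`, so `μ₁ / φ ≥ μ₁(0) / φ(0) = 1`. The denominator of `φ`
vanishes exactly at `T_α`, so `φ`, and with it `μ₁`, tends to `+∞` as `t → T_α⁻`.
-/

open Real Set Filter Topology

lemma div_mul_le_of_deriv_ge_mul {f g k : ℝ → ℝ} {a b : ℝ}
    (hf : ∀ t ∈ Ico a b, DifferentiableAt ℝ f t)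
    (hg : ∀ t ∈ Ico a b, HasDerivAt g (k t * g t) t)
    (hg_pos : ∀ t ∈ Ico a b, 0 < g t)
    (hfk : ∀ t ∈ Ico a b, k t * f t ≤ deriv f t) :
    ∀ t ∈ Ico a b, f a / g a * g t ≤ f t := by
  have hquot : ∀ t ∈ Ico a b,
      HasDerivAt (fun s => f s / g s) ((deriv f t - k t * f t) / g t) t := by
    intro t ht
    refine ((hf t ht).hasDerivAt.div (hg t ht) (hg_pos t ht).ne').congr_deriv ?_
    field_simp
  have hmono : MonotoneOn (fun s => f s / g s) (Ico a b) := by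
    refine monotoneOn_of_hasDerivWithinAt_nonneg (convex_Ico a b)
      (fun t ht => (hquot t ht).continuousAt.continuousWithinAt)
      (fun t ht => (hquot t (interior_subset ht)).hasDerivWithinAt)
      (fun t ht => ?_)
    have ht := interior_subset ht
    exact div_nonneg (sub_nonneg.mpr (hfk t ht)) (hg_pos t ht).le
  intro t ht
  have hab : a ∈ Ico a b := ⟨le_rfl, ht.1.trans_lt ht.2⟩
  have := hmono hab ht ht.1
  rwa [le_div_iff₀ (hg_pos t ht)] at this

lemma hasDerivAt_div_sq_exp_neg_mul_sub (α c A t : ℝ) (ht : exp (-α * t) - c ≠ 0) :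
    HasDerivAt (fun s => A / (exp (-α * s) - c) ^ 2)
      (2 * α * exp (-α * t) / (exp (-α * t) - c) * (A / (exp (-α * t) - c) ^ 2)) t := by
  have hu : HasDerivAt (fun s => exp (-α * s) - c) (exp (-α * t) * -α) t := by
    simpa using ((hasDerivAt_id t).const_mul (-α)).exp.sub_const c
  refine ((hasDerivAt_const t A).div (hu.pow 2) (pow_ne_zero 2 ht)).congr_deriv ?_
  simp only [Pi.pow_apply, Nat.cast_ofNat, Nat.add_one_sub_one, pow_one, zero_mul, zero_sub]
  field_simp

lemma exp_neg_mul_neg_inv_mul_log {α c : ℝ} (hα : α ≠ 0) (hc : 0 < c) :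
    exp (-α * (-(1 / α) * log c)) = c := by
  rw [show -α * (-(1 / α) * log c) = log c by field_simp, exp_log hc]

lemma lt_exp_neg_mul_of_lt_neg_inv_mul_log {α c t : ℝ} (hα : 0 < α) (hc : 0 < c)
    (ht : t < -(1 / α) * log c) : c < exp (-α * t) := by
  calc c = exp (-α * (-(1 / α) * log c)) := (exp_neg_mul_neg_inv_mul_log hα.ne' hc).symm
    _ < exp (-α * t) := exp_lt_exp.mpr (by nlinarith)

lemma tendsto_div_sq_atTop {ι : Type*} {l : Filter ι} {u : ι → ℝ} {A : ℝ} (hA : 0 < A)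
    (hu : Tendsto u l (𝓝 0)) (hu_ne : ∀ᶠ i in l, u i ≠ 0) :
    Tendsto (fun i => A / u i ^ 2) l atTop := by
  have hsq : Tendsto (fun i => u i ^ 2) l (𝓝[>] 0) :=
    tendsto_nhdsWithin_iff.mpr
      ⟨by simpa using hu.pow 2, hu_ne.mono fun i hi => sq_pos_of_ne_zero hi⟩
  simpa [div_eq_mul_inv] using hsq.inv_tendsto_nhdsGT_zero.const_mul_atTop hA

theorem mu_one_lower_bound_and_blowup_general
    (α : ℝ) (hα : 0 < α) (hα' : α < 1 / 2)
    (μ₁ : ℝ → ℝ)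
    (hμ0 : μ₁ 0 = 1)
    (hdiff : ∀ t ∈ Set.Ico (0:ℝ) (-(1 / α) * Real.log (1 - 2 * α)),
      DifferentiableAt ℝ μ₁ t)
    (hineq : ∀ t ∈ Set.Ico (0:ℝ) (-(1 / α) * Real.log (1 - 2 * α)),
      (2 * α * Real.exp (-α * t) / (Real.exp (-α * t) - (1 - 2 * α))) * μ₁ t ≤
        deriv μ₁ t) :
    (∀ t ∈ Set.Ico (0:ℝ) (-(1 / α) * Real.log (1 - 2 * α)),
      4 * α ^ 2 / (Real.exp (-α * t) - (1 - 2 * α)) ^ 2 ≤ μ₁ t) ∧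
    Filter.Tendsto μ₁
      (nhdsWithin (-(1 / α) * Real.log (1 - 2 * α))
        (Set.Iio (-(1 / α) * Real.log (1 - 2 * α))))
      Filter.atTop := by
  set c := 1 - 2 * α
  set T := -(1 / α) * log c
  have hc : 0 < c := by linarith
  have hT : 0 < T := mul_pos_of_neg_of_neg (by simpa using hα) (log_neg hc (by linarith))
  set φ := fun t => 4 * α ^ 2 / (exp (-α * t) - c) ^ 2
  have hden : ∀ t < T, 0 < exp (-α * t) - c := fun t ht =>
    sub_pos.mpr (lt_exp_neg_mul_of_lt_neg_inv_mul_log hα hc ht)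
  have hφ0 : φ 0 = 1 := by
    simp only [φ, c, mul_zero, exp_zero]
    field_simp
    ring
  have hbound : ∀ t ∈ Ico 0 T, φ t ≤ μ₁ t := by
    simpa only [hμ0, hφ0, div_one, one_mul] using div_mul_le_of_deriv_ge_mul (g := φ) hdiff
      (fun t ht => hasDerivAt_div_sq_exp_neg_mul_sub α c (4 * α ^ 2) t (hden t ht.2).ne')
      (fun t ht => div_pos (by positivity) (pow_pos (hden t ht.2) 2)) hineq
  have hφ_top : Tendsto φ (𝓝[<] T) atTop := by
    refine tendsto_div_sq_atTop (by positivity) ?_ ?_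
    · have hu_T : exp (-α * T) - c = 0 :=
        sub_eq_zero.mpr (exp_neg_mul_neg_inv_mul_log hα.ne' hc)
      have hcont : Continuous fun t => exp (-α * t) - c := by fun_prop
      simpa only [hu_T] using (hcont.tendsto T).mono_left nhdsWithin_le_nhds
    · filter_upwards [self_mem_nhdsWithin] with t ht using (hden t ht).ne'
  refine ⟨hbound, tendsto_atTop_mono' _ ?_ hφ_top⟩
  filter_upwards [Ioo_mem_nhdsLT hT] with t ht using hbound t ⟨ht.1.le, ht.2⟩

/-- estimate (4.22) in Theorem 2.3, part 2, of
Chen–Sarria. If `μ₁ > 0` on `[0, T_α)`, `μ₁(0) = 1`, and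
`μ₁'(t) ≥ (2α e^{−αt}/(e^{−αt} − (1 − 2α))) μ₁(t)`, where
`T_α = −(1/α) ln(1 − 2α)` and `0 < α < 1/2`, then
`μ₁(t) ≥ 4α²/(e^{−αt} − (1 − 2α))²`; consequently `μ₁(t) → +∞` as
`t → T_α⁻`. -/
theorem mu_one_lower_bound_and_blowup
    (α : ℝ) (hα : 0 < α) (hα' : α < 1 / 2)
    (μ₁ : ℝ → ℝ)
    (hpos : ∀ t ∈ Set.Ico (0:ℝ) (-(1 / α) * Real.log (1 - 2 * α)), 0 < μ₁ t)
    (hμ0 : μ₁ 0 = 1)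
    (hdiff : ∀ t ∈ Set.Ico (0:ℝ) (-(1 / α) * Real.log (1 - 2 * α)),
      DifferentiableAt ℝ μ₁ t)
    (hineq : ∀ t ∈ Set.Ico (0:ℝ) (-(1 / α) * Real.log (1 - 2 * α)),
      (2 * α * Real.exp (-α * t) / (Real.exp (-α * t) - (1 - 2 * α))) * μ₁ t ≤
        deriv μ₁ t) :
    (∀ t ∈ Set.Ico (0:ℝ) (-(1 / α) * Real.log (1 - 2 * α)),
      4 * α ^ 2 / (Real.exp (-α * t) - (1 - 2 * α)) ^ 2 ≤ μ₁ t) ∧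
    Filter.Tendsto μ₁
      (nhdsWithin (-(1 / α) * Real.log (1 - 2 * α))
        (Set.Iio (-(1 / α) * Real.log (1 - 2 * α))))
      Filter.atTop :=
  mu_one_lower_bound_and_blowup_general α hα hα' μ₁ hμ0 hdiff hineq
end
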